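/- arXiv:2206.10972 — 3 statements merged into one kernel-verified Lean document; each statement's English description precedes it below -/
import Mathlib

section
/- Let Γ be a finite simple graph with a linear order on V(Γ), and let g₁, g₂ ∈ G(Γ) with g₁g₂ geodesic. If g₁ is SD-conical and strongly non-split, then g₁g₂ is also SD-conical and strongly non-split. -/
/-- The commutation relators of the right-angled Artin group `G(Γ)`:
generators `v, w` commute whenever `{v, w}` is NOT an edge of `Γ`
(the convention of the paper). -/
def raagRels {V : Type} (Γ : SimpleGraph V) : Set (FreeGroup V) :=
  {r | ∃ v w : V, v ≠ w ∧ ¬ Γ.Adj v w ∧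
    r = FreeGroup.of v * FreeGroup.of w * (FreeGroup.of v)⁻¹ * (FreeGroup.of w)⁻¹}

/-- The right-angled Artin group `G(Γ)` (paper's convention). -/
abbrev RAAG {V : Type} (Γ : SimpleGraph V) := PresentedGroup (raagRels Γ)

/-- The generator of `G(Γ)` corresponding to a vertex. -/
def raagGen {V : Type} (Γ : SimpleGraph V) (v : V) : RAAG Γ := PresentedGroup.of v

/-- The group element corresponding to a letter `v` or `v⁻¹`
(a letter is a pair `(v, b)`, `b = true` meaning the positive letter `v`). -/
def raagLetter {V : Type} (Γ : SimpleGraph V) (l : V × Bool) : RAAG Γ :=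
  if l.2 then raagGen Γ l.1 else (raagGen Γ l.1)⁻¹

/-- The element of `G(Γ)` represented by a word on `V(Γ)^{±1}`. -/
def evalWord {V : Type} (Γ : SimpleGraph V) (w : List (V × Bool)) : RAAG Γ :=
  (w.map (raagLetter Γ)).prod

/-- The word length `|g|` of an element of `G(Γ)`. -/
noncomputable def wlen {V : Type} (Γ : SimpleGraph V) (g : RAAG Γ) : ℕ :=
  sInf {n | ∃ w : List (V × Bool), evalWord Γ w = g ∧ w.length = n}

/-- A word is reduced if no shorter word represents the same element. -/
def IsReducedWord {V : Type} (Γ : SimpleGraph V) (w : List (V × Bool)) : Prop :=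
  w.length = wlen Γ (evalWord Γ w)

/-- The `n`-th power of a word (concatenation of `n` copies). -/
def wpow {α : Type*} (w : List α) (n : ℕ) : List α := (List.replicate n w).flatten

/-- The support of `g`: the set of generators appearing in some reduced word
representing `g` (this set is known to be independent of the reduced word). -/
def Supp {V : Type} (Γ : SimpleGraph V) (g : RAAG Γ) : Set V :=
  {v | ∃ w : List (V × Bool), evalWord Γ w = g ∧ w.length = wlen Γ g ∧
        v ∈ w.map Prod.fst}

/-- `g` is cyclically reduced if its word length is minimal in its conjugacy class. -/
def CyclicallyReduced {V : Type} (Γ : SimpleGraph V) (g : RAAG Γ) : Prop :=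
  ∀ u : RAAG Γ, wlen Γ g ≤ wlen Γ (u⁻¹ * g * u)

/-- `g` is non-split if its support spans a connected subgraph of `Γ`. -/
def NonSplit {V : Type} (Γ : SimpleGraph V) (g : RAAG Γ) : Prop :=
  ((Γ.induce (Supp Γ g))).Connected

/-- `g` is strongly non-split if it is non-split and no generator disjointly
commutes with `g`. -/
def StronglyNonSplit {V : Type} (Γ : SimpleGraph V) (g : RAAG Γ) : Prop :=
  NonSplit Γ g ∧ ¬ ∃ v : V, v ∉ Supp Γ g ∧ ∀ u ∈ Supp Γ g, ¬ Γ.Adj v u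

/-- The set `S(g)` of starting generators of `g`. -/
def SGen {V : Type} (Γ : SimpleGraph V) (g : RAAG Γ) : Set V :=
  {v | ∃ (b : Bool) (h : RAAG Γ), g = raagLetter Γ (v, b) * h ∧
        wlen Γ g = 1 + wlen Γ h}

/-- `g` is SD-conical (w.r.t. a linear order on the vertices) if `S(g)` is a
singleton `{v₀}` and `v₀` does not commute with any smaller generator,
i.e. `{v, v₀} ∈ E(Γ)` for all `v < v₀`. -/
def SDConical {V : Type} (Γ : SimpleGraph V) (lo : LinearOrder V) (g : RAAG Γ) : Prop :=
  ∃ v₀ : V, SGen Γ g = {v₀} ∧ ∀ v : V, lo.lt v v₀ → Γ.Adj v v₀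

/-- `g` is primitive if it is nontrivial and not a proper power. -/
def RaagPrimitive {V : Type} (Γ : SimpleGraph V) (g : RAAG Γ) : Prop :=
  g ≠ 1 ∧ ∀ (u : RAAG Γ) (n : ℕ), g = u ^ n → n = 1

/-- The order on letters: extend the order on `V` so that each `v` is the
immediate predecessor of `v⁻¹`. -/
def letterLT {V : Type} (lo : LinearOrder V) (l m : V × Bool) : Prop :=
  lo.lt l.1 m.1 ∨ (l.1 = m.1 ∧ l.2 = true ∧ m.2 = false)

/-- `w` is the CGW-normal form `σ(g)` of `g`: the lexicographically largest
reduced word representing `g`. -/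
def NormalForm {V : Type} (Γ : SimpleGraph V) (lo : LinearOrder V)
    (w : List (V × Bool)) (g : RAAG Γ) : Prop :=
  evalWord Γ w = g ∧ w.length = wlen Γ g ∧
    ∀ w' : List (V × Bool), evalWord Γ w' = g → w'.length = wlen Γ g →
      w' = w ∨ List.Lex (letterLT lo) w' w

namespace Raag13

variable {V : Type} {Γ : SimpleGraph V}

abbrev L (V : Type) := V × Bool

def linv (l : L V) : L V := (l.1, !l.2)

@[simp] lemma linv_linv (l : L V) : linv (linv l) = l := by
  cases l with | mk v b => cases b <;> rfl

@[simp] lemma linv_fst (l : L V) : (linv l).1 = l.1 := rfl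

/-- combinatorial commutation of letters -/
def Com (Γ : SimpleGraph V) (l m : L V) : Prop := l.1 ≠ m.1 ∧ ¬ Γ.Adj l.1 m.1

lemma Com.symm {l m : L V} (h : Com Γ l m) : Com Γ m l :=
  ⟨h.1.symm, fun a => h.2 a.symm⟩

lemma com_linv_right {l m : L V} (h : Com Γ l m) : Com Γ l (linv m) := h

lemma com_linv_left {l m : L V} (h : Com Γ l m) : Com Γ (linv l) m := h

lemma not_com_self (l : L V) : ¬ Com Γ l l := fun h => h.1 rfl

lemma not_com_linv (l : L V) : ¬ Com Γ l (linv l) := fun h => h.1 rfl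

/-! ### evalWord basics -/

lemma evalWord_nil : evalWord Γ ([] : List (L V)) = 1 := rfl

lemma evalWord_cons (l : L V) (w : List (L V)) :
    evalWord Γ (l :: w) = raagLetter Γ l * evalWord Γ w := by
  simp [evalWord]

lemma evalWord_append (a b : List (L V)) :
    evalWord Γ (a ++ b) = evalWord Γ a * evalWord Γ b := by
  simp [evalWord]

lemma raagLetter_linv (l : L V) :
    raagLetter Γ (linv l) = (raagLetter Γ l)⁻¹ := by
  cases l with | mk v b => cases b <;> simp [raagLetter, linv]

lemma raagGen_commute {v w : V} (hne : v ≠ w) (hadj : ¬ Γ.Adj v w) :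
    Commute (raagGen Γ v) (raagGen Γ w) := by
  have hr : (FreeGroup.of v * FreeGroup.of w * (FreeGroup.of v)⁻¹ * (FreeGroup.of w)⁻¹ :
      FreeGroup V) ∈ raagRels Γ := ⟨v, w, hne, hadj, rfl⟩
  have h1 : PresentedGroup.mk (raagRels Γ)
      (FreeGroup.of v * FreeGroup.of w * (FreeGroup.of v)⁻¹ * (FreeGroup.of w)⁻¹) = 1 := by
    have := Subgroup.subset_normalClosure (s := raagRels Γ) hr
    exact (QuotientGroup.eq_one_iff _).2 this
  have h2 : raagGen Γ v * raagGen Γ w * (raagGen Γ v)⁻¹ * (raagGen Γ w)⁻¹ = 1 := by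
    simpa [raagGen, PresentedGroup.of, map_mul, map_inv] using h1
  have h3 : raagGen Γ v * raagGen Γ w * (raagGen Γ v)⁻¹ = raagGen Γ w :=
    mul_inv_eq_one.mp h2
  have h4 := congrArg (· * raagGen Γ v) h3
  exact (by simpa [mul_assoc] using h4 : raagGen Γ v * raagGen Γ w = raagGen Γ w * raagGen Γ v)

lemma com_commute {l m : L V} (h : Com Γ l m) :
    Commute (raagLetter Γ l) (raagLetter Γ m) := by
  have hbase : Commute (raagGen Γ l.1) (raagGen Γ m.1) := raagGen_commute h.1 h.2
  cases l with | mk v b =>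
  cases m with | mk w c =>
  cases b <;> cases c <;>
    simp only [raagLetter] <;>
    first
      | exact hbase
      | exact hbase.inv_left
      | exact hbase.inv_right
      | exact (hbase.inv_left).inv_right

/-! ### wlen basics -/

lemma evalWord_mk (w : List (L V)) :
    evalWord Γ w = PresentedGroup.mk (raagRels Γ) (FreeGroup.mk w) := by
  induction w with
  | nil => simp [evalWord_nil, ← FreeGroup.one_eq_mk]
  | cons l t ih =>
    have : FreeGroup.mk (l :: t) = FreeGroup.mk [l] * FreeGroup.mk t := by
      rw [FreeGroup.mul_mk]; rfl
    rw [evalWord_cons, this, map_mul, ih]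
    congr 1
    cases l with | mk v b =>
    cases b
    · show raagLetter Γ (v, false) = _
      have : (FreeGroup.mk [(v, false)] : FreeGroup V) = (FreeGroup.of v)⁻¹ := by
        rw [show (FreeGroup.of v : FreeGroup V) = FreeGroup.mk [(v, true)] from rfl,
          FreeGroup.inv_mk]
        rfl
      rw [this, map_inv]
      rfl
    · rfl

lemma wlen_set_nonempty (g : RAAG Γ) :
    {n | ∃ w : List (L V), evalWord Γ w = g ∧ w.length = n}.Nonempty := by
  classical
  obtain ⟨x, rfl⟩ := PresentedGroup.mk_surjective (raagRels Γ) g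
  exact ⟨x.toWord.length, x.toWord, by rw [evalWord_mk, FreeGroup.mk_toWord], rfl⟩

lemma exists_reduced_word (g : RAAG Γ) :
    ∃ w : List (L V), evalWord Γ w = g ∧ w.length = wlen Γ g := by
  have := Nat.sInf_mem (wlen_set_nonempty (Γ := Γ) g)
  obtain ⟨w, hw, hl⟩ := this
  exact ⟨w, hw, hl⟩

lemma wlen_le {g : RAAG Γ} {w : List (L V)} (h : evalWord Γ w = g) :
    wlen Γ g ≤ w.length :=
  Nat.sInf_le ⟨w, h, rfl⟩

lemma wlen_mul_le (g h : RAAG Γ) : wlen Γ (g * h) ≤ wlen Γ g + wlen Γ h := by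
  obtain ⟨w1, hw1, hl1⟩ := exists_reduced_word (Γ := Γ) g
  obtain ⟨w2, hw2, hl2⟩ := exists_reduced_word (Γ := Γ) h
  calc wlen Γ (g * h) ≤ (w1 ++ w2).length :=
        wlen_le (by rw [evalWord_append, hw1, hw2])
    _ = wlen Γ g + wlen Γ h := by simp [hl1, hl2]

lemma wlen_letter_le (l : L V) : wlen Γ (raagLetter Γ l) ≤ 1 :=
  wlen_le (w := [l]) (by simp [evalWord_cons, evalWord_nil])

/-! ### shuffle relation -/

def Step (Γ : SimpleGraph V) (w w' : List (L V)) : Prop :=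
  ∃ a b l m, Com Γ l m ∧ w = a ++ l :: m :: b ∧ w' = a ++ m :: l :: b

def Sh (Γ : SimpleGraph V) : List (L V) → List (L V) → Prop :=
  Relation.ReflTransGen (Step Γ)

lemma Step.symm {w w' : List (L V)} (h : Step Γ w w') : Step Γ w' w := by
  obtain ⟨a, b, l, m, hc, h1, h2⟩ := h
  exact ⟨a, b, m, l, hc.symm, h2, h1⟩

lemma Sh.refl (w : List (L V)) : Sh Γ w w := Relation.ReflTransGen.refl

lemma Sh.trans {w1 w2 w3 : List (L V)} (h1 : Sh Γ w1 w2) (h2 : Sh Γ w2 w3) :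
    Sh Γ w1 w3 := Relation.ReflTransGen.trans h1 h2

lemma Sh.symm {w w' : List (L V)} (h : Sh Γ w w') : Sh Γ w' w := by
  induction h with
  | refl => exact Sh.refl _
  | tail _ hstep ih => exact Sh.trans (Relation.ReflTransGen.single hstep.symm) ih

lemma Step.sh {w w' : List (L V)} (h : Step Γ w w') : Sh Γ w w' :=
  Relation.ReflTransGen.single h

lemma Step.cons {w w' : List (L V)} (x : L V) (h : Step Γ w w') :
    Step Γ (x :: w) (x :: w') := by
  obtain ⟨a, b, l, m, hc, h1, h2⟩ := h
  exact ⟨x :: a, b, l, m, hc, by simp [h1], by simp [h2]⟩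

lemma Step.append_left {w w' : List (L V)} (x : List (L V)) (h : Step Γ w w') :
    Step Γ (x ++ w) (x ++ w') := by
  obtain ⟨a, b, l, m, hc, h1, h2⟩ := h
  exact ⟨x ++ a, b, l, m, hc, by simp [h1], by simp [h2]⟩

lemma Step.append_right {w w' : List (L V)} (x : List (L V)) (h : Step Γ w w') :
    Step Γ (w ++ x) (w' ++ x) := by
  obtain ⟨a, b, l, m, hc, h1, h2⟩ := h
  exact ⟨a, b ++ x, l, m, hc, by simp [h1], by simp [h2]⟩

lemma Sh.cons {w w' : List (L V)} (x : L V) (h : Sh Γ w w') :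
    Sh Γ (x :: w) (x :: w') :=
  Relation.ReflTransGen.lift _ (fun _ _ hs => Step.cons x hs) _ _ h

lemma Sh.append_left {w w' : List (L V)} (x : List (L V)) (h : Sh Γ w w') :
    Sh Γ (x ++ w) (x ++ w') :=
  Relation.ReflTransGen.lift _ (fun _ _ hs => Step.append_left x hs) _ _ h

lemma Sh.append_right {w w' : List (L V)} (x : List (L V)) (h : Sh Γ w w') :
    Sh Γ (w ++ x) (w' ++ x) :=
  Relation.ReflTransGen.lift _ (fun _ _ hs => Step.append_right x hs) _ _ h

lemma Step.eval {w w' : List (L V)} (h : Step Γ w w') :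
    evalWord Γ w = evalWord Γ w' := by
  obtain ⟨a, b, l, m, hc, h1, h2⟩ := h
  subst h1; subst h2
  simp only [evalWord_append, evalWord_cons, ← mul_assoc]
  congr 1
  rw [mul_assoc, mul_assoc, (com_commute hc).eq]

lemma Sh.eval {w w' : List (L V)} (h : Sh Γ w w') :
    evalWord Γ w = evalWord Γ w' := by
  induction h with
  | refl => rfl
  | tail _ hstep ih => exact ih.trans hstep.eval

lemma Step.perm {w w' : List (L V)} (h : Step Γ w w') : w.Perm w' := by
  obtain ⟨a, b, l, m, _, h1, h2⟩ := h
  subst h1; subst h2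
  exact List.Perm.append_left a (List.Perm.swap m l b)

lemma Sh.perm {w w' : List (L V)} (h : Sh Γ w w') : w.Perm w' := by
  induction h with
  | refl => exact List.Perm.refl _
  | tail _ hstep ih => exact ih.trans hstep.perm

lemma Sh.length {w w' : List (L V)} (h : Sh Γ w w') : w.length = w'.length :=
  h.perm.length_eq

/-! ### Frontable -/

def Fr (Γ : SimpleGraph V) (l : L V) (w : List (L V)) : Prop :=
  ∃ a b, w = a ++ l :: b ∧ ∀ m ∈ a, Com Γ m l

lemma fr_head (l : L V) (w : List (L V)) : Fr Γ l (l :: w) :=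
  ⟨[], w, rfl, by simp⟩

/-- bring a frontable letter to the front -/
lemma sh_front {l : L V} {a b : List (L V)} (hc : ∀ m ∈ a, Com Γ m l) :
    Sh Γ (a ++ l :: b) (l :: (a ++ b)) := by
  induction a with
  | nil => exact Sh.refl _
  | cons x t ih =>
    have h1 : Sh Γ (x :: (t ++ l :: b)) (x :: l :: (t ++ b)) :=
      Sh.cons x (ih (fun m hm => hc m (List.mem_cons_of_mem x hm)))
    have h2 : Step Γ (x :: l :: (t ++ b)) (l :: x :: (t ++ b)) :=
      ⟨[], t ++ b, x, l, hc x (by simp), rfl, rfl⟩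
    exact Sh.trans h1 (Sh.trans h2.sh (Sh.refl _))

lemma Fr.sh_decomp {l : L V} {w : List (L V)} (h : Fr Γ l w) :
    ∃ u, Sh Γ w (l :: u) := by
  obtain ⟨a, b, rfl, hc⟩ := h
  exact ⟨a ++ b, sh_front hc⟩

/-- Step-invariance of frontability -/
lemma Fr.step {l : L V} {w w' : List (L V)} (hs : Step Γ w w') (h : Fr Γ l w) :
    Fr Γ l w' := by
  obtain ⟨a, b, hab, hc⟩ := h
  obtain ⟨c, d, x, y, hxy, h1, h2⟩ := hs
  rw [hab] at h1
  subst h2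
  rcases List.append_eq_append_iff.mp h1 with ⟨e, he, hb'⟩ | ⟨f, hf, hd'⟩
  · cases e with
    | nil =>
      simp only [List.nil_append] at hb'
      obtain ⟨rfl, rfl⟩ := List.cons.inj hb'
      subst he
      simp only [List.append_nil]
      refine ⟨a ++ [y], d, by simp, ?_⟩
      intro m hm
      rcases List.mem_append.mp hm with hm | hm
      · exact hc m hm
      · simp only [List.mem_singleton] at hm; subst hm; exact hxy.symm
    | cons p e2 =>
      simp only [List.cons_append] at hb'
      obtain ⟨rfl, rfl⟩ := List.cons.inj hb'
      subst he
      exact ⟨a, e2 ++ y :: x :: d, by simp, hc⟩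
  · cases f with
    | nil =>
      simp only [List.nil_append] at hd'
      obtain ⟨rfl, rfl⟩ := List.cons.inj hd'.symm
      simp only [List.append_nil] at hf
      subst hf
      refine ⟨a ++ [y], d, by simp, ?_⟩
      intro m hm
      rcases List.mem_append.mp hm with hm | hm
      · exact hc m hm
      · simp only [List.mem_singleton] at hm; subst hm; exact hxy.symm
    | cons p f2 =>
      simp only [List.cons_append] at hd'
      obtain ⟨rfl, hd2⟩ := List.cons.inj hd'
      cases f2 with
      | nil =>
        simp only [List.nil_append] at hd2
        obtain ⟨rfl, rfl⟩ := List.cons.inj hd2.symm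
        subst hf
        refine ⟨c, x :: b, by simp, ?_⟩
        intro m hm; exact hc m (by simp [hm])
      | cons q f3 =>
        simp only [List.cons_append] at hd2
        obtain ⟨rfl, hd3⟩ := List.cons.inj hd2
        subst hf
        refine ⟨c ++ y :: x :: f3, b, by simp [← hd3], ?_⟩
        intro z hz
        simp only [List.mem_append, List.mem_cons] at hz
        rcases hz with hz | hz | hz | hz
        · exact hc z (by simp [hz])
        · exact hz ▸ hc y (by simp)
        · exact hz ▸ hc x (by simp)
        · exact hc z (by simp [hz])

lemma Fr.sh {l : L V} {w w' : List (L V)} (hs : Sh Γ w w') (h : Fr Γ l w) :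
    Fr Γ l w' := by
  induction hs with
  | refl => exact h
  | tail _ hstep ih => exact ih.step hstep

/-- split a frontable decomposition of an append -/
lemma fr_append {l : L V} {x y : List (L V)} (h : Fr Γ l (x ++ y)) :
    Fr Γ l x ∨ ((∀ m ∈ x, Com Γ m l) ∧ Fr Γ l y) := by
  obtain ⟨a, b, hab, hc⟩ := h
  rcases List.append_eq_append_iff.mp hab with ⟨e, he, hy⟩ | ⟨f, hf, hlb⟩
  · -- a = x ++ e, y = e ++ l :: b
    right
    subst he
    exact ⟨fun m hm => hc m (by simp [hm]), e, b, hy, fun m hm => hc m (by simp [hm])⟩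
  · -- x = a ++ f, l :: b = f ++ y
    cases f with
    | nil =>
      right
      simp only [List.append_nil] at hf
      simp only [List.nil_append] at hlb
      subst hf
      exact ⟨fun m hm => hc m hm, [], b, hlb.symm, by simp⟩
    | cons p f2 =>
      left
      simp only [List.cons_append] at hlb
      obtain ⟨rfl, rfl⟩ := List.cons.inj hlb
      exact ⟨a, f2, hf, hc⟩

/-! ### removal relation and left cancellation -/

def Rem (Γ : SimpleGraph V) (l : L V) (w u : List (L V)) : Prop :=
  ∃ a b, w = a ++ l :: b ∧ (∀ m ∈ a, Com Γ m l) ∧ Sh Γ u (a ++ b)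

lemma Rem.step {l : L V} {w w' u : List (L V)} (hs : Step Γ w w') (h : Rem Γ l w u) :
    Rem Γ l w' u := by
  obtain ⟨a, b, hab, hc, hsh⟩ := h
  obtain ⟨c, d, x, y, hxy, h1, h2⟩ := hs
  rw [hab] at h1
  subst h2
  rcases List.append_eq_append_iff.mp h1 with ⟨e, he, hb'⟩ | ⟨f, hf, hd'⟩
  · cases e with
    | nil =>
      simp only [List.nil_append] at hb'
      obtain ⟨rfl, rfl⟩ := List.cons.inj hb'
      subst he
      simp only [List.append_nil]
      refine ⟨a ++ [y], d, by simp, ?_, by simpa using hsh⟩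
      intro m hm
      rcases List.mem_append.mp hm with hm | hm
      · exact hc m hm
      · simp only [List.mem_singleton] at hm; subst hm; exact hxy.symm
    | cons p e2 =>
      simp only [List.cons_append] at hb'
      obtain ⟨rfl, rfl⟩ := List.cons.inj hb'
      subst he
      refine ⟨a, e2 ++ y :: x :: d, by simp, hc, ?_⟩
      refine hsh.trans ?_
      exact Sh.append_left a (Sh.append_left e2
        (Step.sh ⟨[], d, x, y, hxy, rfl, rfl⟩))
  · cases f with
    | nil =>
      simp only [List.nil_append] at hd'
      obtain ⟨rfl, rfl⟩ := List.cons.inj hd'.symm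
      simp only [List.append_nil] at hf
      subst hf
      refine ⟨a ++ [y], d, by simp, ?_, by simpa using hsh⟩
      intro m hm
      rcases List.mem_append.mp hm with hm | hm
      · exact hc m hm
      · simp only [List.mem_singleton] at hm; subst hm; exact hxy.symm
    | cons p f2 =>
      simp only [List.cons_append] at hd'
      obtain ⟨rfl, hd2⟩ := List.cons.inj hd'
      cases f2 with
      | nil =>
        simp only [List.nil_append] at hd2
        obtain ⟨rfl, rfl⟩ := List.cons.inj hd2.symm
        subst hf
        refine ⟨c, x :: b, by simp, ?_, by simpa using hsh⟩
        intro m hm; exact hc m (by simp [hm])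
      | cons q f3 =>
        simp only [List.cons_append] at hd2
        obtain ⟨rfl, hd3⟩ := List.cons.inj hd2
        subst hf
        refine ⟨c ++ y :: x :: f3, b, by simp [← hd3], ?_, ?_⟩
        · intro z hz
          simp only [List.mem_append, List.mem_cons] at hz
          rcases hz with hz | hz | hz | hz
          · exact hc z (by simp [hz])
          · exact hz ▸ hc y (by simp)
          · exact hz ▸ hc x (by simp)
          · exact hc z (by simp [hz])
        · refine hsh.trans ?_
          have hst : Step Γ (c ++ (x :: y :: (f3 ++ b))) (c ++ (y :: x :: (f3 ++ b))) :=
            ⟨c, f3 ++ b, x, y, hxy, rfl, rfl⟩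
          simpa using hst.sh

lemma Rem.sh {l : L V} {w w' u : List (L V)} (hs : Sh Γ w w') (h : Rem Γ l w u) :
    Rem Γ l w' u := by
  induction hs with
  | refl => exact h
  | tail _ hstep ih => exact ih.step hstep

/-- left cancellation of the shuffle relation -/
lemma sh_cons_cancel {l : L V} {u u' : List (L V)} (h : Sh Γ (l :: u) (l :: u')) :
    Sh Γ u u' := by
  have h0 : Rem Γ l (l :: u) u := ⟨[], u, rfl, by simp, by simpa using Sh.refl u⟩
  obtain ⟨a, b, hab, hc, hsh⟩ := h0.sh h
  cases a with
  | nil =>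
    simp only [List.nil_append] at hab hsh
    obtain ⟨-, rfl⟩ := List.cons.inj hab
    exact hsh
  | cons p a2 =>
    simp only [List.cons_append] at hab
    obtain ⟨hpl, -⟩ := List.cons.inj hab
    have hcp := hc p (by simp)
    rw [← hpl] at hcp
    exact absurd hcp (not_com_self l)

/-! ### local reducedness -/

def HasCan (Γ : SimpleGraph V) (w : List (L V)) : Prop :=
  ∃ p x u, Sh Γ w (p ++ x :: linv x :: u)

def LocRed (Γ : SimpleGraph V) (w : List (L V)) : Prop := ¬ HasCan Γ w

lemma locred_nil : LocRed Γ ([] : List (L V)) := by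
  rintro ⟨p, x, u, h⟩
  have := h.length
  simp at this

lemma LocRed.sh {w w' : List (L V)} (h : LocRed Γ w) (hs : Sh Γ w w') :
    LocRed Γ w' := fun ⟨p, x, u, h2⟩ => h ⟨p, x, u, hs.trans h2⟩

lemma LocRed.tail {l : L V} {w : List (L V)} (h : LocRed Γ (l :: w)) :
    LocRed Γ w := by
  rintro ⟨p, x, u, h2⟩
  exact h ⟨l :: p, x, u, by simpa using Sh.cons l h2⟩

lemma locred_remove {y : L V} {a b : List (L V)}
    (h : LocRed Γ (a ++ y :: b)) (hc : ∀ m ∈ a, Com Γ m y) :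
    LocRed Γ (a ++ b) := by
  rintro ⟨p, x, u, h2⟩
  refine h ⟨y :: p, x, u, ?_⟩
  exact (sh_front hc).trans (by simpa using Sh.cons y h2)

lemma locred_cons {l : L V} {w : List (L V)} (h : LocRed Γ w)
    (hfr : ¬ Fr Γ (linv l) w) : LocRed Γ (l :: w) := by
  rintro ⟨p, x, u, h2⟩
  have h0 : Rem Γ l (l :: w) w := ⟨[], w, rfl, by simp, by simpa using Sh.refl w⟩
  obtain ⟨a, b, hab, hc, hsh⟩ := h0.sh h2
  rcases List.append_eq_append_iff.mp hab with ⟨e, he, hb'⟩ | ⟨f, hf', hd'⟩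
  · -- a = p ++ e, x :: linv x :: u = e ++ l :: b
    cases e with
    | nil =>
      simp only [List.append_nil] at he
      simp only [List.nil_append] at hb'
      obtain ⟨hxl, hb2⟩ := List.cons.inj hb'
      refine hfr (Fr.sh hsh.symm ?_)
      refine ⟨p, u, ?_, fun m hm => ?_⟩
      · rw [he, ← hb2, hxl]
      · rw [he] at hc
        exact hc m hm
    | cons q e2 =>
      simp only [List.cons_append] at hb'
      obtain ⟨hq, hb2⟩ := List.cons.inj hb'
      cases e2 with
      | nil =>
        simp only [List.nil_append] at hb2
        obtain ⟨hl2, -⟩ := List.cons.inj hb2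
        have hcx := hc q (by simp [he])
        rw [← hq, ← hl2] at hcx
        exact not_com_linv x hcx
      | cons r e3 =>
        simp only [List.cons_append] at hb2
        obtain ⟨hr, hb3⟩ := List.cons.inj hb2
        refine h ⟨p, x, e3 ++ b, ?_⟩
        have heq : a ++ b = p ++ x :: linv x :: (e3 ++ b) := by
          rw [he, ← hq, ← hr]
          simp
        exact heq ▸ hsh
  · -- p = a ++ f, l :: b = f ++ x :: linv x :: u
    cases f with
    | nil =>
      simp only [List.append_nil] at hf'
      simp only [List.nil_append] at hd'
      obtain ⟨hlx, hb2⟩ := List.cons.inj hd'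
      refine hfr (Fr.sh hsh.symm ?_)
      refine ⟨a, u, ?_, fun m hm => hc m hm⟩
      rw [hb2, ← hlx]
    | cons q f2 =>
      simp only [List.cons_append] at hd'
      obtain ⟨-, hb2⟩ := List.cons.inj hd'
      refine h ⟨a ++ f2, x, u, ?_⟩
      have heq : a ++ b = (a ++ f2) ++ x :: linv x :: u := by
        rw [hb2]; simp
      exact heq ▸ hsh

lemma locred_of_reduced {w : List (L V)} (h : w.length = wlen Γ (evalWord Γ w)) :
    LocRed Γ w := by
  rintro ⟨p, x, u, h2⟩
  have heval : evalWord Γ w = evalWord Γ (p ++ u) := by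
    have := h2.eval
    rw [this]
    simp only [evalWord_append, evalWord_cons, raagLetter_linv]
    group
  have hle : wlen Γ (evalWord Γ w) ≤ p.length + u.length :=
    le_trans (wlen_le heval.symm) (by simp)
  have hlen := h2.length
  simp only [List.length_append, List.length_cons] at hlen
  omega

/-! ### the action on classes of locally reduced words -/

def R (Γ : SimpleGraph V) := {w : List (L V) // LocRed Γ w}

instance shSetoid (Γ : SimpleGraph V) : Setoid (R Γ) where
  r r₁ r₂ := Sh Γ r₁.1 r₂.1
  iseqv := ⟨fun _ => Sh.refl _, Sh.symm, Sh.trans⟩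

def N (Γ : SimpleGraph V) := Quotient (shSetoid Γ)

lemma sh_of_eqv {r r' : R Γ} (h : r ≈ r') : Sh Γ r.1 r'.1 := h

lemma fr_of_sh_cons {l : L V} {w u : List (L V)} (h : Sh Γ w (l :: u)) :
    Fr Γ l w := Fr.sh h.symm (fr_head l u)

lemma fr_cons_elim {y z : L V} {w : List (L V)} (h : Fr Γ y (z :: w)) :
    y = z ∨ (Com Γ z y ∧ Fr Γ y w) := by
  obtain ⟨a, b, hab, hc⟩ := h
  cases a with
  | nil =>
    left
    simp only [List.nil_append] at hab
    exact (List.cons.inj hab).1.symm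
  | cons p a2 =>
    right
    simp only [List.cons_append] at hab
    obtain ⟨hpz, hb⟩ := List.cons.inj hab
    refine ⟨hpz ▸ hc p (by simp), a2, b, hb, fun m hm => hc m (by simp [hm])⟩

lemma exists_R_rem {y : L V} {w : List (L V)} (hw : LocRed Γ w) (h : Fr Γ y w) :
    ∃ u : R Γ, Sh Γ w (y :: u.1) := by
  obtain ⟨a, b, rfl, hc⟩ := h
  exact ⟨⟨a ++ b, locred_remove hw hc⟩, sh_front hc⟩

open scoped Classical in
noncomputable def actFun (l : L V) (r : R Γ) : N Γ :=
  if h : ∃ u : R Γ, Sh Γ r.1 (linv l :: u.1) then ⟦h.choose⟧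
  else ⟦⟨l :: r.1, locred_cons r.2
    (fun hfr => h (exists_R_rem r.2 hfr))⟩⟧

open scoped Classical in
lemma actFun_sound (l : L V) (r r' : R Γ) (hrr : r ≈ r') :
    actFun l r = actFun l r' := by
  have hsh : Sh Γ r.1 r'.1 := hrr
  unfold actFun
  by_cases h : ∃ u : R Γ, Sh Γ r.1 (linv l :: u.1)
  · have h' : ∃ u : R Γ, Sh Γ r'.1 (linv l :: u.1) := by
      obtain ⟨u, hu⟩ := h
      exact ⟨u, hsh.symm.trans hu⟩
    erw [dif_pos h, dif_pos h']
    refine Quotient.sound ?_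
    have h1 := h.choose_spec
    have h2 := h'.choose_spec
    exact sh_cons_cancel (h1.symm.trans (hsh.trans h2))
  · have h' : ¬ ∃ u : R Γ, Sh Γ r'.1 (linv l :: u.1) := by
      rintro ⟨u, hu⟩
      exact h ⟨u, hsh.trans hu⟩
    erw [dif_neg h, dif_neg h']
    exact Quotient.sound (Sh.cons l hsh)

noncomputable def act (l : L V) : N Γ → N Γ :=
  Quotient.lift (actFun l) (actFun_sound l)

open scoped Classical in
lemma act_eq_of_sh {l : L V} {r u : R Γ} (h : Sh Γ r.1 (linv l :: u.1)) :
    act l ⟦r⟧ = ⟦u⟧ := by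
  show actFun l r = _
  unfold actFun
  have hex : ∃ u : R Γ, Sh Γ r.1 (linv l :: u.1) := ⟨u, h⟩
  erw [dif_pos hex]
  exact Quotient.sound (sh_cons_cancel (hex.choose_spec.symm.trans h))

open scoped Classical in
lemma act_eq_cons {l : L V} {r : R Γ} (h : ¬ Fr Γ (linv l) r.1) :
    act l ⟦r⟧ = ⟦⟨l :: r.1, locred_cons r.2 h⟩⟧ := by
  show actFun l r = _
  unfold actFun
  have hex : ¬ ∃ u : R Γ, Sh Γ r.1 (linv l :: u.1) := by
    rintro ⟨u, hu⟩
    exact h (fr_of_sh_cons hu)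
  erw [dif_neg hex]

lemma not_fr_linv_of_locred_cons {l : L V} {w : List (L V)}
    (h : LocRed Γ (l :: w)) : ¬ Fr Γ (linv l) w := by
  intro hfr
  obtain ⟨u2, hu2⟩ := hfr.sh_decomp
  exact h ⟨[], l, u2, by simpa using Sh.cons l hu2⟩

lemma act_act_inv (l : L V) (x : N Γ) : act l (act (linv l) x) = x := by
  induction x using Quotient.inductionOn with
  | h r =>
  by_cases hf : Fr Γ l r.1
  · obtain ⟨u, hu⟩ := exists_R_rem r.2 hf
    have h1 : act (linv l) ⟦r⟧ = ⟦u⟧ := act_eq_of_sh (by rwa [linv_linv])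
    rw [h1]
    have hnf : ¬ Fr Γ (linv l) u.1 := by
      intro hfr
      obtain ⟨u2, hu2⟩ := hfr.sh_decomp
      exact r.2 ⟨[], l, u2, by simpa using hu.trans (Sh.cons l hu2)⟩
    rw [act_eq_cons hnf]
    exact Quotient.sound (Sh.symm hu)
  · have h1 : act (linv l) ⟦r⟧ = ⟦⟨linv l :: r.1, _⟩⟧ :=
      act_eq_cons (by rwa [linv_linv])
    rw [h1]
    exact act_eq_of_sh (Sh.refl _)

noncomputable def ePerm (l : L V) : Equiv.Perm (N Γ) where
  toFun := act l
  invFun := act (linv l)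
  left_inv := fun x => by
    have := act_act_inv (Γ := Γ) (linv l) x
    rwa [linv_linv] at this
  right_inv := act_act_inv l

/-- the two actions of commuting letters commute (asymmetric helper) -/
lemma act_comm_aux {l m : L V} (h : Com Γ l m) (r : R Γ)
    (hm : Fr Γ (linv m) r.1) (hl : ¬ Fr Γ (linv l) r.1) :
    act l (act m ⟦r⟧) = act m (act l ⟦r⟧) := by
  obtain ⟨u, hu⟩ := exists_R_rem r.2 hm
  have h1 : act m ⟦r⟧ = ⟦u⟧ := act_eq_of_sh hu
  have hnfl : ¬ Fr Γ (linv l) u.1 := by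
    intro hfr
    obtain ⟨u2, hu2⟩ := hfr.sh_decomp
    have hsw : Step Γ (linv m :: linv l :: u2) (linv l :: linv m :: u2) :=
      ⟨[], u2, linv m, linv l, h.symm, rfl, rfl⟩
    exact hl (fr_of_sh_cons (u := linv m :: u2)
      ((hu.trans (Sh.cons (linv m) hu2)).trans hsw.sh))
  have h2 : act l ⟦u⟧ = ⟦⟨l :: u.1, locred_cons u.2 hnfl⟩⟧ := act_eq_cons hnfl
  have h3 : act l ⟦r⟧ = ⟦⟨l :: r.1, locred_cons r.2 hl⟩⟧ := act_eq_cons hl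
  rw [h1, h2, h3]
  refine (act_eq_of_sh (u := ⟨l :: u.1, locred_cons u.2 hnfl⟩) ?_).symm
  show Sh Γ (l :: r.1) (linv m :: l :: u.1)
  have hsw : Step Γ (l :: linv m :: u.1) (linv m :: l :: u.1) :=
    ⟨[], u.1, l, linv m, h, rfl, rfl⟩
  exact (Sh.cons l hu).trans hsw.sh

lemma act_comm {l m : L V} (h : Com Γ l m) (x : N Γ) :
    act l (act m x) = act m (act l x) := by
  induction x using Quotient.inductionOn with
  | h r =>
  by_cases hm : Fr Γ (linv m) r.1 <;> by_cases hl : Fr Γ (linv l) r.1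
  · -- both cancel
    obtain ⟨u, hu⟩ := exists_R_rem r.2 hm
    obtain ⟨z, hz⟩ := exists_R_rem r.2 hl
    have h1 : act m ⟦r⟧ = ⟦u⟧ := act_eq_of_sh hu
    have h2 : act l ⟦r⟧ = ⟦z⟧ := act_eq_of_sh hz
    have hfu : Fr Γ (linv l) u.1 := by
      have := hl.sh hu
      rcases fr_cons_elim this with heq | ⟨-, hfr⟩
      · exact absurd (congrArg Prod.fst heq) h.1
      · exact hfr
    obtain ⟨u2, hu2⟩ := exists_R_rem u.2 hfu
    have h3 : act l ⟦u⟧ = ⟦u2⟧ := act_eq_of_sh hu2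
    have hw2 : Sh Γ r.1 (linv l :: linv m :: u2.1) := by
      have hsw : Step Γ (linv m :: linv l :: u2.1) (linv l :: linv m :: u2.1) :=
        ⟨[], u2.1, linv m, linv l, h.symm, rfl, rfl⟩
      exact (hu.trans (Sh.cons (linv m) hu2)).trans hsw.sh
    have hz2 : Sh Γ z.1 (linv m :: u2.1) :=
      sh_cons_cancel (hz.symm.trans hw2)
    have h4 : act m ⟦z⟧ = ⟦u2⟧ := act_eq_of_sh hz2
    rw [h1, h2, h3, h4]
  · exact act_comm_aux h r hm hl
  · exact (act_comm_aux h.symm r hl hm).symm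
  · have h1 : act m ⟦r⟧ = ⟦⟨m :: r.1, locred_cons r.2 hm⟩⟧ := act_eq_cons hm
    have h2 : act l ⟦r⟧ = ⟦⟨l :: r.1, locred_cons r.2 hl⟩⟧ := act_eq_cons hl
    have hfl : ¬ Fr Γ (linv l) (m :: r.1) := by
      intro hfr
      rcases fr_cons_elim hfr with heq | ⟨-, hfr2⟩
      · exact h.1 (by simpa [linv] using congrArg Prod.fst heq)
      · exact hl hfr2
    have hfm : ¬ Fr Γ (linv m) (l :: r.1) := by
      intro hfr
      rcases fr_cons_elim hfr with heq | ⟨-, hfr2⟩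
      · exact h.symm.1 (by simpa [linv] using congrArg Prod.fst heq)
      · exact hm hfr2
    erw [h1, h2, act_eq_cons hfl, act_eq_cons hfm]
    refine Quotient.sound ?_
    show Sh Γ (l :: m :: r.1) (m :: l :: r.1)
    exact (Step.sh ⟨[], r.1, l, m, h, rfl, rfl⟩)

/-! ### the homomorphism and the shuffle theorem -/

noncomputable def phi (Γ : SimpleGraph V) : RAAG Γ →* Equiv.Perm (N Γ) := by
  refine PresentedGroup.toGroup (f := fun v => (ePerm (Γ := Γ) (v, true))) ?_
  rintro r ⟨v, w, hne, hadj, rfl⟩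
  simp only [map_mul, map_inv, FreeGroup.lift_apply_of]
  have hcom : Commute (ePerm (Γ := Γ) (v, true)) (ePerm (Γ := Γ) (w, true)) := by
    apply Equiv.ext
    intro x
    show act (v, true) (act (w, true) x) = act (w, true) (act (v, true) x)
    exact act_comm ⟨hne, hadj⟩ x
  have := commutatorElement_eq_one_iff_commute.mpr hcom
  simpa [commutatorElement_def, mul_assoc] using this

lemma phi_letter (l : L V) : phi Γ (raagLetter Γ l) = ePerm l := by
  cases l with | mk v b =>
  cases b
  · show phi Γ ((raagGen Γ v)⁻¹) = _
    rw [map_inv]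
    have : phi Γ (raagGen Γ v) = ePerm (v, true) :=
      PresentedGroup.toGroup.of _
    rw [this]
    apply Equiv.ext
    intro x
    rfl
  · exact PresentedGroup.toGroup.of _

def Rnil (Γ : SimpleGraph V) : R Γ := ⟨[], locred_nil⟩

lemma phi_eval {w : List (L V)} (hw : LocRed Γ w) :
    phi Γ (evalWord Γ w) ⟦Rnil Γ⟧ = ⟦⟨w, hw⟩⟧ := by
  induction w with
  | nil =>
    rw [evalWord_nil, map_one]
    rfl
  | cons l t ih =>
    rw [evalWord_cons, map_mul]
    have ht := hw.tail
    have : phi Γ (evalWord Γ t) ⟦Rnil Γ⟧ = ⟦⟨t, ht⟩⟧ := ih ht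
    show phi Γ (raagLetter Γ l) (phi Γ (evalWord Γ t) ⟦Rnil Γ⟧) = _
    rw [this, phi_letter]
    show act l ⟦⟨t, ht⟩⟧ = _
    exact act_eq_cons (r := ⟨t, ht⟩) (not_fr_linv_of_locred_cons hw)

/-- The shuffle theorem: two locally reduced words representing the same
element differ by commutations. -/
theorem sh_of_eval_eq {w w' : List (L V)} (hw : LocRed Γ w) (hw' : LocRed Γ w')
    (he : evalWord Γ w = evalWord Γ w') : Sh Γ w w' := by
  have h1 := phi_eval hw
  have h2 := phi_eval hw'
  rw [he, h2] at h1
  exact Quotient.exact h1.symm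

lemma locred_length {w : List (L V)} (hw : LocRed Γ w) :
    w.length = wlen Γ (evalWord Γ w) := by
  obtain ⟨m, hm, hml⟩ := exists_reduced_word (Γ := Γ) (evalWord Γ w)
  have hmr : LocRed Γ m := locred_of_reduced (by rw [hm]; exact hml)
  have := (sh_of_eval_eq hw hmr hm.symm).length
  rw [this, hml]

/-! ### support and graph lemmas -/

lemma supp_eq {g : RAAG Γ} {w : List (L V)} (hew : evalWord Γ w = g)
    (hlw : w.length = wlen Γ g) : Supp Γ g = {v | v ∈ w.map Prod.fst} := by
  ext v
  constructor
  · rintro ⟨w', he', hl', hm⟩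
    have hred' : LocRed Γ w' := locred_of_reduced (by rw [he']; exact hl')
    have hred : LocRed Γ w := locred_of_reduced (by rw [hew]; exact hlw)
    have hsh := sh_of_eval_eq hred' hred (by rw [he', hew])
    exact ((hsh.perm.map Prod.fst).mem_iff).mp hm
  · intro hm
    exact ⟨w, hew, hlw, hm⟩

def inclHom (Γ : SimpleGraph V) {T S : Set V} (hTS : T ⊆ S) :
    Γ.induce T →g Γ.induce S where
  toFun := fun a => ⟨a.1, hTS a.2⟩
  map_rel' := fun hab => hab

lemma connected_mono {T S : Set V} (hTS : T ⊆ S) (hT : (Γ.induce T).Connected)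
    (hadj : ∀ v, v ∉ T → ∃ u ∈ T, Γ.Adj v u) : (Γ.induce S).Connected := by
  have hTne : Nonempty T := hT.nonempty
  obtain ⟨⟨t0, ht0⟩⟩ := hTne
  rw [SimpleGraph.connected_iff]
  refine ⟨?_, ⟨⟨t0, hTS ht0⟩⟩⟩
  have key : ∀ x : S, ∃ t : S, (t : V) ∈ T ∧ (Γ.induce S).Reachable x t := by
    intro x
    by_cases hx : (x : V) ∈ T
    · exact ⟨x, hx, SimpleGraph.Reachable.refl x⟩
    · obtain ⟨u, hu, ha⟩ := hadj x hx
      refine ⟨⟨u, hTS hu⟩, hu, SimpleGraph.Adj.reachable ?_⟩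
      simp only [SimpleGraph.induce, SimpleGraph.comap_adj]
      exact ha
  intro x y
  obtain ⟨tx, htx, hrx⟩ := key x
  obtain ⟨ty, hty, hry⟩ := key y
  have hmid : (Γ.induce S).Reachable tx ty := by
    have h1 := hT.preconnected ⟨tx, htx⟩ ⟨ty, hty⟩
    have h2 := h1.map (inclHom Γ hTS)
    have e1 : (inclHom Γ hTS) ⟨↑tx, htx⟩ = tx := Subtype.ext rfl
    have e2 : (inclHom Γ hTS) ⟨↑ty, hty⟩ = ty := Subtype.ext rfl
    rwa [e1, e2] at h2
  exact (hrx.trans hmid).trans hry.symm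

end Raag13

open Raag13 in
theorem stmt13 {V : Type} (Γ : SimpleGraph V) (lo : LinearOrder V)
    (g₁ g₂ : RAAG Γ)
    (hgeo : wlen Γ (g₁ * g₂) = wlen Γ g₁ + wlen Γ g₂)
    (hsd : SDConical Γ lo g₁) (hsns : StronglyNonSplit Γ g₁) :
    SDConical Γ lo (g₁ * g₂) ∧ StronglyNonSplit Γ (g₁ * g₂) := by
  classical
  obtain ⟨v₀, hS1, hord⟩ := hsd
  obtain ⟨w1, hw1e, hw1l⟩ := exists_reduced_word (Γ := Γ) g₁
  obtain ⟨w2, hw2e, hw2l⟩ := exists_reduced_word (Γ := Γ) g₂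
  have hWe : evalWord Γ (w1 ++ w2) = g₁ * g₂ := by
    rw [evalWord_append, hw1e, hw2e]
  have hWl : (w1 ++ w2).length = wlen Γ (g₁ * g₂) := by
    simp [hgeo, hw1l, hw2l]
  have hWred : LocRed Γ (w1 ++ w2) := locred_of_reduced (by rw [hWe]; exact hWl)
  have hsupp1 : Supp Γ g₁ = {v | v ∈ w1.map Prod.fst} := supp_eq hw1e hw1l
  have hsuppsub : Supp Γ g₁ ⊆ Supp Γ (g₁ * g₂) := by
    intro v hv
    obtain ⟨w', he', hl', hm⟩ := hv
    refine ⟨w' ++ w2, by rw [evalWord_append, he', hw2e], ?_, ?_⟩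
    · simp [hgeo, hl', hw2l]
    · simp only [List.map_append, List.mem_append]
      exact Or.inl hm
  -- v₀ ∈ SGen (g₁ g₂)
  have hv₀ : v₀ ∈ SGen Γ g₁ := by rw [hS1]; rfl
  obtain ⟨b0, h1, hdecomp, hlen1⟩ := hv₀
  have hmem : v₀ ∈ SGen Γ (g₁ * g₂) := by
    refine ⟨b0, h1 * g₂, by rw [hdecomp, mul_assoc], ?_⟩
    have e1 : wlen Γ (h1 * g₂) ≤ wlen Γ h1 + wlen Γ g₂ := wlen_mul_le _ _
    have e2 : wlen Γ (g₁ * g₂) ≤ wlen Γ (raagLetter Γ (v₀, b0)) + wlen Γ (h1 * g₂) := by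
      have := wlen_mul_le (Γ := Γ) (raagLetter Γ (v₀, b0)) (h1 * g₂)
      rwa [← mul_assoc, ← hdecomp] at this
    have e3 := wlen_letter_le (Γ := Γ) (v₀, b0)
    omega
  -- SGen (g₁ g₂) ⊆ {v₀}
  have hsub : ∀ v ∈ SGen Γ (g₁ * g₂), v = v₀ := by
    intro v hv
    obtain ⟨b, h, hdec, hlen⟩ := hv
    obtain ⟨wh, hwhe, hwhl⟩ := exists_reduced_word (Γ := Γ) h
    have hconse : evalWord Γ ((v, b) :: wh) = g₁ * g₂ := by
      rw [evalWord_cons, hwhe, ← hdec]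
    have hconsl : ((v, b) :: wh).length = wlen Γ (g₁ * g₂) := by
      simp only [List.length_cons]
      omega
    have hconsred : LocRed Γ ((v, b) :: wh) :=
      locred_of_reduced (by rw [hconse]; exact hconsl)
    have hsh : Sh Γ (w1 ++ w2) ((v, b) :: wh) :=
      sh_of_eval_eq hWred hconsred (by rw [hWe, hconse])
    have hfr : Fr Γ (v, b) (w1 ++ w2) := fr_of_sh_cons hsh
    rcases fr_append hfr with hfr1 | ⟨hcom, -⟩
    · -- the letter can be brought to the front of w1 : v ∈ SGen g₁
      obtain ⟨a, c, hac, hcomm⟩ := hfr1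
      have hshw1 : Sh Γ w1 ((v, b) :: (a ++ c)) := by
        rw [hac]; exact sh_front hcomm
      have heq : g₁ = raagLetter Γ (v, b) * evalWord Γ (a ++ c) := by
        rw [← hw1e, hshw1.eval, evalWord_cons]
      have hlac : wlen Γ (evalWord Γ (a ++ c)) ≤ (a ++ c).length :=
        wlen_le rfl
      have hlength : (a ++ c).length + 1 = wlen Γ g₁ := by
        have hl := hshw1.length
        simp only [List.length_cons] at hl
        omega
      have hle2 : wlen Γ g₁ ≤ 1 + wlen Γ (evalWord Γ (a ++ c)) := by
        have := wlen_mul_le (Γ := Γ) (raagLetter Γ (v, b)) (evalWord Γ (a ++ c))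
        have e3 := wlen_letter_le (Γ := Γ) (v, b)
        rw [← heq] at this
        omega
      have hSmem : v ∈ SGen Γ g₁ := ⟨b, evalWord Γ (a ++ c), heq, by omega⟩
      rw [hS1] at hSmem
      exact hSmem
    · -- every letter of w1 commutes with v : contradiction with strong non-splitness
      exfalso
      apply hsns.2
      refine ⟨v, ?_, ?_⟩
      · rw [hsupp1]
        intro hvmem
        simp only [Set.mem_setOf_eq, List.mem_map] at hvmem
        obtain ⟨m, hm, hmv⟩ := hvmem
        exact (hcom m hm).1 hmv
      · intro u hu
        rw [hsupp1] at hu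
        simp only [Set.mem_setOf_eq, List.mem_map] at hu
        obtain ⟨m, hm, hmu⟩ := hu
        intro hadj
        exact (hcom m hm).2 (by rw [hmu]; exact hadj.symm)
  have hSGen : SGen Γ (g₁ * g₂) = {v₀} :=
    Set.eq_singleton_iff_unique_mem.mpr ⟨hmem, hsub⟩
  refine ⟨⟨v₀, hSGen, hord⟩, ?_, ?_⟩
  · -- NonSplit
    have hpush : ∀ v, v ∉ Supp Γ g₁ → ∃ u ∈ Supp Γ g₁, Γ.Adj v u := by
      intro v hv
      by_contra hno
      push_neg at hno
      exact hsns.2 ⟨v, hv, hno⟩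
    exact connected_mono hsuppsub hsns.1 hpush
  · rintro ⟨v, hv, hall⟩
    exact hsns.2 ⟨v, fun hvin => hv (hsuppsub hvin),
      fun u hu => hall u (hsuppsub hu)⟩
end

section
/- Let Γ be a finite simple graph with a linear order on V(Γ). If a g^n b is a geodesic decomposition in G(Γ) with n ≥ 1 and g strongly non-split and SD-conical, then σ(a g^n b) = σ(a) σ(g)^{n−1} σ(gb), i.e., the CGW-normal form of a g^n b is the concatenation of σ(a), then n−1 copies of σ(g), then σ(gb). -/
namespace Stmt14

variable {V : Type}

/-- inverse of a letter -/
def invL (l : V × Bool) : V × Bool := (l.1, !l.2)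

@[simp] theorem invL_invL (l : V × Bool) : invL (invL l) = l := by
  cases l with
  | mk v b => simp [invL]

@[simp] theorem invL_fst (l : V × Bool) : (invL l).1 = l.1 := rfl

/-- two letters "pass" each other: distinct commuting generators -/
def pss (Γ : SimpleGraph V) (x z : V × Bool) : Prop :=
  x.1 ≠ z.1 ∧ ¬ Γ.Adj x.1 z.1

theorem pss_symm {Γ : SimpleGraph V} {x z : V × Bool} (h : pss Γ x z) : pss Γ z x :=
  ⟨Ne.symm h.1, fun ha => h.2 ha.symm⟩

theorem pss_invL {Γ : SimpleGraph V} {x z : V × Bool} (h : pss Γ x z) : pss Γ (invL x) z := h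

theorem pss_invL' {Γ : SimpleGraph V} {x z : V × Bool} (h : pss Γ (invL x) z) : pss Γ x z := h

@[simp] theorem evalWord_nil (Γ : SimpleGraph V) : evalWord Γ [] = 1 := rfl

theorem evalWord_cons (Γ : SimpleGraph V) (l : V × Bool) (w : List (V × Bool)) :
    evalWord Γ (l :: w) = raagLetter Γ l * evalWord Γ w := by
  simp [evalWord]

theorem evalWord_append (Γ : SimpleGraph V) (w₁ w₂ : List (V × Bool)) :
    evalWord Γ (w₁ ++ w₂) = evalWord Γ w₁ * evalWord Γ w₂ := by
  simp [evalWord]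

theorem raagLetter_invL (Γ : SimpleGraph V) (l : V × Bool) :
    raagLetter Γ (invL l) = (raagLetter Γ l)⁻¹ := by
  cases l with
  | mk v b => cases b <;> simp [raagLetter, invL]

theorem raagGen_commute {Γ : SimpleGraph V} {v u : V} (hne : v ≠ u) (hA : ¬ Γ.Adj v u) :
    Commute (raagGen Γ v) (raagGen Γ u) := by
  have hr : (FreeGroup.of v * FreeGroup.of u * (FreeGroup.of v)⁻¹ * (FreeGroup.of u)⁻¹ :
      FreeGroup V) ∈ raagRels Γ := ⟨v, u, hne, hA, rfl⟩
  have hmem : (FreeGroup.of v * FreeGroup.of u * (FreeGroup.of v)⁻¹ * (FreeGroup.of u)⁻¹ :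
      FreeGroup V) ∈ Subgroup.normalClosure (raagRels Γ) :=
    Subgroup.subset_normalClosure hr
  have h1 : (PresentedGroup.mk (raagRels Γ))
      (FreeGroup.of v * FreeGroup.of u * (FreeGroup.of v)⁻¹ * (FreeGroup.of u)⁻¹) = 1 := by
    rwa [← QuotientGroup.eq_one_iff] at hmem
  have h2 : raagGen Γ v * raagGen Γ u * (raagGen Γ v)⁻¹ * (raagGen Γ u)⁻¹ = 1 := by
    simpa [raagGen, PresentedGroup.of, map_mul, map_inv] using h1
  have h3 : raagGen Γ v * raagGen Γ u * (raagGen Γ v)⁻¹ = raagGen Γ u :=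
    mul_inv_eq_one.mp h2
  have h4 : raagGen Γ v * raagGen Γ u = raagGen Γ u * raagGen Γ v :=
    mul_inv_eq_iff_eq_mul.mp h3
  exact h4

end Stmt14


namespace Stmt14

variable {V : Type}

theorem letter_commute {Γ : SimpleGraph V} {x z : V × Bool} (h : pss Γ x z) :
    Commute (raagLetter Γ x) (raagLetter Γ z) := by
  have base : Commute (raagGen Γ x.1) (raagGen Γ z.1) := raagGen_commute h.1 h.2
  have hx : raagLetter Γ x = if x.2 then raagGen Γ x.1 else (raagGen Γ x.1)⁻¹ := rfl
  have hz : raagLetter Γ z = if z.2 then raagGen Γ z.1 else (raagGen Γ z.1)⁻¹ := rfl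
  rw [hx, hz]
  cases x.2 <;> cases z.2
  · simpa using base.inv_left.inv_right
  · simpa using base.inv_right.inv_left.inv_right
  · simpa using base.inv_right
  · simpa using base

/-- swap of two adjacent commuting letters (shuffle step) -/
inductive Sw (Γ : SimpleGraph V) : List (V × Bool) → List (V × Bool) → Prop
  | swap (x y : V × Bool) (t : List (V × Bool)) (h : pss Γ x y) :
      Sw Γ (x :: y :: t) (y :: x :: t)
  | cons (a : V × Bool) {t t' : List (V × Bool)} (h : Sw Γ t t') : Sw Γ (a :: t) (a :: t')

/-- deletion of a reachable occurrence of `invL x` -/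
inductive Del (Γ : SimpleGraph V) (x : V × Bool) : List (V × Bool) → List (V × Bool) → Prop
  | found (t : List (V × Bool)) : Del Γ x (invL x :: t) t
  | step (z : V × Bool) {t t' : List (V × Bool)} (h : pss Γ x z) (hd : Del Γ x t t') :
      Del Γ x (z :: t) (z :: t')

/-- removal of a cancelling pair -/
inductive Rm (Γ : SimpleGraph V) : List (V × Bool) → List (V × Bool) → Prop
  | head (x : V × Bool) {t t' : List (V × Bool)} (hd : Del Γ x t t') : Rm Γ (x :: t) t'
  | cons (a : V × Bool) {t t' : List (V × Bool)} (h : Rm Γ t t') : Rm Γ (a :: t) (a :: t')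

/-- shuffle equivalence -/
def shEq (Γ : SimpleGraph V) : List (V × Bool) → List (V × Bool) → Prop :=
  Relation.EqvGen (Sw Γ)

theorem shEq_refl (Γ : SimpleGraph V) (w : List (V × Bool)) : shEq Γ w w :=
  Relation.EqvGen.refl w

theorem shEq_symm {Γ : SimpleGraph V} {w u : List (V × Bool)} (h : shEq Γ w u) : shEq Γ u w :=
  Relation.EqvGen.symm _ _ h

theorem shEq_trans {Γ : SimpleGraph V} {w u v : List (V × Bool)} (h : shEq Γ w u)
    (h' : shEq Γ u v) : shEq Γ w v := Relation.EqvGen.trans _ _ _ h h'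

theorem shEq_of_sw {Γ : SimpleGraph V} {w u : List (V × Bool)} (h : Sw Γ w u) : shEq Γ w u :=
  Relation.EqvGen.rel _ _ h

theorem Sw.eval {Γ : SimpleGraph V} {w u : List (V × Bool)} (h : Sw Γ w u) :
    evalWord Γ w = evalWord Γ u := by
  induction h with
  | swap x y t h =>
      rw [evalWord_cons, evalWord_cons, evalWord_cons, evalWord_cons, ← mul_assoc, ← mul_assoc,
        (letter_commute h).eq]
  | cons a h ih => rw [evalWord_cons, evalWord_cons, ih]

theorem shEq.eval {Γ : SimpleGraph V} {w u : List (V × Bool)} (h : shEq Γ w u) :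
    evalWord Γ w = evalWord Γ u := by
  induction h with
  | rel _ _ h => exact h.eval
  | refl => rfl
  | symm _ _ _ ih => exact ih.symm
  | trans _ _ _ _ _ ih1 ih2 => exact ih1.trans ih2

theorem Sw.length {Γ : SimpleGraph V} {w u : List (V × Bool)} (h : Sw Γ w u) :
    w.length = u.length := by
  induction h with
  | swap => rfl
  | cons a h ih => simp [ih]

theorem shEq.length {Γ : SimpleGraph V} {w u : List (V × Bool)} (h : shEq Γ w u) :
    w.length = u.length := by
  induction h with
  | rel _ _ h => exact h.length
  | refl => rfl
  | symm _ _ _ ih => exact ih.symm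
  | trans _ _ _ _ _ ih1 ih2 => exact ih1.trans ih2

theorem Sw.perm {Γ : SimpleGraph V} {w u : List (V × Bool)} (h : Sw Γ w u) : w.Perm u := by
  induction h with
  | swap x y t _ => exact List.Perm.swap y x t
  | cons a _ ih => exact ih.cons a

theorem shEq.perm {Γ : SimpleGraph V} {w u : List (V × Bool)} (h : shEq Γ w u) : w.Perm u := by
  induction h with
  | rel _ _ h => exact h.perm
  | refl => exact List.Perm.refl _
  | symm _ _ _ ih => exact ih.symm
  | trans _ _ _ _ _ ih1 ih2 => exact ih1.trans ih2

theorem Sw.symm {Γ : SimpleGraph V} {w u : List (V × Bool)} (h : Sw Γ w u) : Sw Γ u w := by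
  induction h with
  | swap x y t h => exact Sw.swap y x t (pss_symm h)
  | cons a _ ih => exact Sw.cons a ih

theorem Del.eval {Γ : SimpleGraph V} {x : V × Bool} {t t' : List (V × Bool)}
    (h : Del Γ x t t') : evalWord Γ t' = raagLetter Γ x * evalWord Γ t := by
  induction h with
  | found t => rw [evalWord_cons, raagLetter_invL, ← mul_assoc, mul_inv_cancel, one_mul]
  | step z hzp _ ih =>
      rw [evalWord_cons, evalWord_cons, ih, ← mul_assoc, ← mul_assoc, (letter_commute hzp).eq]

theorem Del.length {Γ : SimpleGraph V} {x : V × Bool} {t t' : List (V × Bool)}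
    (h : Del Γ x t t') : t.length = t'.length + 1 := by
  induction h with
  | found t => rfl
  | step z _ _ ih => simp [ih]

theorem Rm.eval {Γ : SimpleGraph V} {w u : List (V × Bool)} (h : Rm Γ w u) :
    evalWord Γ w = evalWord Γ u := by
  induction h with
  | head x hd => rw [evalWord_cons, hd.eval]
  | cons a _ ih => rw [evalWord_cons, evalWord_cons, ih]

theorem Rm.length {Γ : SimpleGraph V} {w u : List (V × Bool)} (h : Rm Γ w u) :
    w.length = u.length + 2 := by
  induction h with
  | head x hd => simp [hd.length]
  | cons a _ ih => simpa using ih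

/-- the full congruence -/
def cong (Γ : SimpleGraph V) : List (V × Bool) → List (V × Bool) → Prop :=
  Relation.EqvGen (fun a b => Sw Γ a b ∨ Rm Γ a b)

theorem cong.eval {Γ : SimpleGraph V} {w u : List (V × Bool)} (h : cong Γ w u) :
    evalWord Γ w = evalWord Γ u := by
  induction h with
  | rel _ _ h => rcases h with h | h; exacts [h.eval, h.eval]
  | refl => rfl
  | symm _ _ _ ih => exact ih.symm
  | trans _ _ _ _ _ ih1 ih2 => exact ih1.trans ih2

theorem cong_cons {Γ : SimpleGraph V} (a : V × Bool) {w u : List (V × Bool)} (h : cong Γ w u) :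
    cong Γ (a :: w) (a :: u) := by
  induction h with
  | rel x y h =>
      refine Relation.EqvGen.rel _ _ ?_
      rcases h with h | h
      · exact Or.inl (Sw.cons a h)
      · exact Or.inr (Rm.cons a h)
  | refl x => exact Relation.EqvGen.refl _
  | symm _ _ _ ih => exact Relation.EqvGen.symm _ _ ih
  | trans _ _ _ _ _ ih1 ih2 => exact Relation.EqvGen.trans _ _ _ ih1 ih2

end Stmt14


namespace Stmt14

variable {V : Type}

def congSetoid (Γ : SimpleGraph V) : Setoid (List (V × Bool)) :=
  ⟨cong Γ, ⟨fun w => Relation.EqvGen.refl w, fun h => Relation.EqvGen.symm _ _ h,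
    fun h h' => Relation.EqvGen.trans _ _ _ h h'⟩⟩

def XQ (Γ : SimpleGraph V) := Quotient (congSetoid Γ)

def mkX (Γ : SimpleGraph V) (w : List (V × Bool)) : XQ Γ := Quotient.mk (congSetoid Γ) w

def actL (Γ : SimpleGraph V) (l : V × Bool) : XQ Γ → XQ Γ :=
  Quotient.map (fun w => l :: w) (fun _ _ h => cong_cons l h)

@[simp] theorem actL_mk (Γ : SimpleGraph V) (l : V × Bool) (w : List (V × Bool)) :
    actL Γ l (mkX Γ w) = mkX Γ (l :: w) := rfl

theorem cong_cancel_pair (Γ : SimpleGraph V) (l : V × Bool) (w : List (V × Bool)) :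
    cong Γ (l :: invL l :: w) w :=
  Relation.EqvGen.rel _ _ (Or.inr (Rm.head l (Del.found w)))

theorem actL_inv_left (Γ : SimpleGraph V) (l : V × Bool) (q : XQ Γ) :
    actL Γ l (actL Γ (invL l) q) = q := by
  induction q using Quotient.inductionOn with
  | h w =>
      refine Quotient.sound ?_
      have h : invL (invL l) = l := invL_invL l
      calc cong Γ (l :: invL l :: w) w := by exact cong_cancel_pair Γ l w

theorem actL_inv_right (Γ : SimpleGraph V) (l : V × Bool) (q : XQ Γ) :
    actL Γ (invL l) (actL Γ l q) = q := by
  induction q using Quotient.inductionOn with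
  | h w =>
      refine Quotient.sound ?_
      have : cong Γ (invL l :: invL (invL l) :: w) w := cong_cancel_pair Γ (invL l) w
      rwa [invL_invL] at this

def actE (Γ : SimpleGraph V) (v : V) : Equiv.Perm (XQ Γ) where
  toFun := actL Γ (v, true)
  invFun := actL Γ (v, false)
  left_inv := fun q => by
    have := actL_inv_right Γ (v, true) q
    simpa [invL] using this
  right_inv := fun q => by
    have := actL_inv_left Γ (v, true) q
    simpa [invL] using this

theorem rels_act_trivial (Γ : SimpleGraph V) :
    ∀ r ∈ raagRels Γ, FreeGroup.lift (fun v => actE Γ v) r = 1 := by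
  rintro r ⟨v, u, hne, hA, rfl⟩
  ext q
  induction q using Quotient.inductionOn with
  | h w =>
      simp only [map_mul, map_inv, FreeGroup.lift_apply_of, Equiv.Perm.mul_apply, Equiv.Perm.one_apply]
      have e1 : ((actE Γ u)⁻¹ : Equiv.Perm (XQ Γ)) (mkX Γ w) = mkX Γ ((u, false) :: w) := rfl
      have e2 : ((actE Γ v)⁻¹ : Equiv.Perm (XQ Γ)) (mkX Γ ((u, false) :: w)) =
          mkX Γ ((v, false) :: (u, false) :: w) := rfl
      have e3 : (actE Γ u) (mkX Γ ((v, false) :: (u, false) :: w)) =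
          mkX Γ ((u, true) :: (v, false) :: (u, false) :: w) := rfl
      have e4 : (actE Γ v) (mkX Γ ((u, true) :: (v, false) :: (u, false) :: w)) =
          mkX Γ ((v, true) :: (u, true) :: (v, false) :: (u, false) :: w) := rfl
      show (actE Γ v) ((actE Γ u) (((actE Γ v)⁻¹) (((actE Γ u)⁻¹) (mkX Γ w)))) = mkX Γ w
      rw [e1, e2, e3, e4]
      refine Quotient.sound ?_
      have hswap : Sw Γ ((v, true) :: (u, true) :: (v, false) :: (u, false) :: w)
          ((v, true) :: (v, false) :: (u, true) :: (u, false) :: w) := by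
        refine Sw.cons _ (Sw.swap _ _ _ ?_)
        exact ⟨fun hh => hne (by simpa using hh.symm), fun hh => hA (by simpa using hh.symm)⟩
      refine Relation.EqvGen.trans _ _ _ (Relation.EqvGen.rel _ _ (Or.inl hswap)) ?_
      have h1 : cong Γ ((v, true) :: (v, false) :: (u, true) :: (u, false) :: w)
          ((u, true) :: (u, false) :: w) := by
        have : invL (v, true) = (v, false) := rfl
        exact Relation.EqvGen.rel _ _ (Or.inr (Rm.head (v, true) (by
          rw [← this]; exact Del.found _)))
      refine Relation.EqvGen.trans _ _ _ h1 ?_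
      exact Relation.EqvGen.rel _ _ (Or.inr (Rm.head (u, true) (by
        have : invL (u, true) = (u, false) := rfl
        rw [← this]; exact Del.found _)))

noncomputable def Phi (Γ : SimpleGraph V) : RAAG Γ →* Equiv.Perm (XQ Γ) :=
  PresentedGroup.toGroup (rels_act_trivial Γ)

theorem Phi_letter (Γ : SimpleGraph V) (l : V × Bool) (q : XQ Γ) :
    Phi Γ (raagLetter Γ l) q = actL Γ l q := by
  cases l with
  | mk v b =>
      cases b
      · show Phi Γ ((raagGen Γ v)⁻¹) q = _
        rw [map_inv]
        have h : Phi Γ (raagGen Γ v) = actE Γ v := PresentedGroup.toGroup.of _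
        rw [h]
        rfl
      · show Phi Γ (raagGen Γ v) q = _
        have h : Phi Γ (raagGen Γ v) = actE Γ v := PresentedGroup.toGroup.of _
        rw [h]
        rfl

theorem Phi_evalWord (Γ : SimpleGraph V) (w u : List (V × Bool)) :
    Phi Γ (evalWord Γ w) (mkX Γ u) = mkX Γ (w ++ u) := by
  induction w with
  | nil => simp [evalWord_nil]
  | cons l t ih =>
      rw [evalWord_cons, map_mul, Equiv.Perm.mul_apply, ih, Phi_letter]
      rfl

/-- Completeness: words with equal evaluation are congruent. -/
theorem cong_of_eval_eq {Γ : SimpleGraph V} {w u : List (V × Bool)}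
    (h : evalWord Γ w = evalWord Γ u) : cong Γ w u := by
  have h1 : mkX Γ (w ++ []) = mkX Γ (u ++ []) := by
    rw [← Phi_evalWord, ← Phi_evalWord, h]
  simp only [List.append_nil] at h1
  exact Quotient.exact h1

end Stmt14


namespace Stmt14

variable {V : Type}

theorem evalWord_eq_mk (Γ : SimpleGraph V) (L : List (V × Bool)) :
    evalWord Γ L = PresentedGroup.mk (raagRels Γ) (FreeGroup.mk L) := by
  induction L with
  | nil =>
      have : (FreeGroup.mk ([] : List (V × Bool))) = (1 : FreeGroup V) := rfl
      rw [evalWord_nil, this, map_one]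
  | cons l t ih =>
      have hsplit : FreeGroup.mk (l :: t) = FreeGroup.mk [l] * FreeGroup.mk t := by
        rw [FreeGroup.mul_mk]; rfl
      rw [evalWord_cons, hsplit, map_mul, ih]
      congr 1
      cases l with
      | mk v b =>
          cases b
          · have h1 : ((FreeGroup.of v)⁻¹ : FreeGroup V) = FreeGroup.mk [(v, false)] := by
              show (FreeGroup.mk [(v, true)])⁻¹ = _
              rw [FreeGroup.inv_mk]
              rfl
            rw [← h1, map_inv]
            rfl
          · rfl

theorem exists_word (Γ : SimpleGraph V) (g : RAAG Γ) :
    ∃ w : List (V × Bool), evalWord Γ w = g := by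
  classical
  obtain ⟨x, rfl⟩ := PresentedGroup.mk_surjective (raagRels Γ) g
  refine ⟨x.toWord, ?_⟩
  rw [evalWord_eq_mk, FreeGroup.mk_toWord]

theorem wlen_le (Γ : SimpleGraph V) {w : List (V × Bool)} {g : RAAG Γ}
    (h : evalWord Γ w = g) : wlen Γ g ≤ w.length :=
  Nat.sInf_le ⟨w, h, rfl⟩

theorem exists_geodesic (Γ : SimpleGraph V) (g : RAAG Γ) :
    ∃ w : List (V × Bool), evalWord Γ w = g ∧ w.length = wlen Γ g := by
  have hne : {n | ∃ w : List (V × Bool), evalWord Γ w = g ∧ w.length = n}.Nonempty := by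
    obtain ⟨w, hw⟩ := exists_word Γ g
    exact ⟨w.length, w, hw, rfl⟩
  have := Nat.sInf_mem hne
  obtain ⟨w, hw, hl⟩ := this
  exact ⟨w, hw, hl⟩

theorem wlen_mul_le (Γ : SimpleGraph V) (x y : RAAG Γ) :
    wlen Γ (x * y) ≤ wlen Γ x + wlen Γ y := by
  obtain ⟨wx, hx, hlx⟩ := exists_geodesic Γ x
  obtain ⟨wy, hy, hly⟩ := exists_geodesic Γ y
  have : evalWord Γ (wx ++ wy) = x * y := by rw [evalWord_append, hx, hy]
  have h := wlen_le Γ this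
  simpa [hlx, hly] using h

end Stmt14


namespace Stmt14

variable {V : Type}

theorem shEq_cons {Γ : SimpleGraph V} (a : V × Bool) {t t' : List (V × Bool)}
    (h : shEq Γ t t') : shEq Γ (a :: t) (a :: t') := by
  induction h with
  | rel _ _ h => exact Relation.EqvGen.rel _ _ (Sw.cons a h)
  | refl _ => exact Relation.EqvGen.refl _
  | symm _ _ _ ih => exact Relation.EqvGen.symm _ _ ih
  | trans _ _ _ _ _ ih1 ih2 => exact Relation.EqvGen.trans _ _ _ ih1 ih2

theorem DelDet {Γ : SimpleGraph V} {x : V × Bool} {t t₁ t₂ : List (V × Bool)}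
    (h₁ : Del Γ x t t₁) (h₂ : Del Γ x t t₂) : t₁ = t₂ := by
  induction h₁ generalizing t₂ with
  | found t =>
      cases h₂ with
      | found _ => rfl
      | step z hz hd => exact absurd rfl hz.1
  | step z hz hd ih =>
      cases h₂ with
      | found _ => exact absurd rfl hz.1
      | step _ _ hd₂ => rw [ih hd₂]

theorem DelFront {Γ : SimpleGraph V} {x : V × Bool} {t t' : List (V × Bool)}
    (h : Del Γ x t t') : shEq Γ t (invL x :: t') := by
  induction h with
  | found t => exact shEq_refl Γ _
  | step z hz hd ih =>
      refine shEq_trans (shEq_cons z ih) ?_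
      refine shEq_of_sw (Sw.swap z (invL x) _ ?_)
      exact pss_symm (pss_invL hz)

theorem Del_inversion {Γ : SimpleGraph V} {b c : V × Bool} {t m₂ : List (V × Bool)}
    (h : Del Γ b (c :: t) m₂) :
    (c = invL b ∧ m₂ = t) ∨ ∃ m₂', pss Γ b c ∧ Del Γ b t m₂' ∧ m₂ = c :: m₂' := by
  cases h with
  | found _ => exact Or.inl ⟨rfl, rfl⟩
  | step _ hz hd => exact Or.inr ⟨_, hz, hd, rfl⟩

theorem DelDelC {Γ : SimpleGraph V} {a b : V × Bool} {m m₁ m₂ : List (V × Bool)}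
    (h₁ : Del Γ a m m₁) (h₂ : Del Γ b m m₂) (hne : a.1 ≠ b.1) :
    ∃ s, Del Γ a m₂ s ∧ Del Γ b m₁ s := by
  induction h₁ generalizing m₂ with
  | found t =>
      rcases Del_inversion h₂ with ⟨heq, rfl⟩ | ⟨m₂', hz, hd, rfl⟩
      · exact absurd (congrArg Prod.fst heq) hne
      · exact ⟨m₂', Del.found _, hd⟩
  | step z hz hd ih =>
      cases h₂ with
      | found _ => exact ⟨_, hd, Del.found _⟩
      | step _ hz₂ hd₂ =>
          obtain ⟨s, hs₁, hs₂⟩ := ih hd₂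
          exact ⟨z :: s, Del.step z hz hs₁, Del.step z hz₂ hs₂⟩

/-- transport of a deletion along a swap -/
theorem DS {Γ : SimpleGraph V} {t t₂ : List (V × Bool)} (hs : Sw Γ t t₂) {x : V × Bool}
    {t' : List (V × Bool)} (hd : Del Γ x t t') :
    ∃ t₂', Del Γ x t₂ t₂' ∧ (t' = t₂' ∨ Sw Γ t' t₂') := by
  induction hs generalizing t' with
  | swap p q r hpq =>
      cases hd with
      | found =>
          exact ⟨q :: r, Del.step q (pss_invL' hpq) (Del.found r), Or.inl rfl⟩
      | step _ hxp hd₀ =>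
          cases hd₀ with
          | found => exact ⟨p :: r, Del.found _, Or.inl rfl⟩
          | step _ hxq hd₁ =>
              exact ⟨q :: p :: _, Del.step q hxq (Del.step p hxp hd₁),
                Or.inr (Sw.swap p q _ hpq)⟩
  | cons a hst ih =>
      cases hd with
      | found => exact ⟨_, Del.found _, Or.inr hst⟩
      | step _ hxa hd₀ =>
          obtain ⟨t₂', h1, h2⟩ := ih hd₀
          refine ⟨a :: t₂', Del.step a hxa h1, ?_⟩
          rcases h2 with rfl | h2
          · exact Or.inl rfl
          · exact Or.inr (Sw.cons a h2)

/-- transport of a pair-removal along a swap -/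
theorem SwRm {Γ : SimpleGraph V} {w w' : List (V × Bool)} (hs : Sw Γ w w') {u : List (V × Bool)}
    (hr : Rm Γ w u) : ∃ u', Rm Γ w' u' ∧ shEq Γ u u' := by
  induction hs generalizing u with
  | swap x y t hxy =>
      cases hr with
      | head _ hd =>
          cases hd with
          | found => exact absurd rfl hxy.1
          | step _ hxy₂ hd₀ =>
              exact ⟨_, Rm.cons y (Rm.head x hd₀), shEq_refl Γ _⟩
      | cons _ hr₀ =>
          cases hr₀ with
          | head _ hd => exact ⟨_, Rm.head y (Del.step x (pss_symm hxy) hd), shEq_refl Γ _⟩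
          | cons _ hr₁ =>
              exact ⟨_, Rm.cons y (Rm.cons x hr₁),
                shEq_of_sw (Sw.swap x y _ hxy)⟩
  | cons a hst ih =>
      cases hr with
      | head _ hd =>
          obtain ⟨t₂', h1, h2⟩ := DS hst hd
          refine ⟨t₂', Rm.head a h1, ?_⟩
          rcases h2 with rfl | h2
          · exact shEq_refl Γ _
          · exact shEq_of_sw h2
      | cons _ hr₀ =>
          obtain ⟨u₀', h1, h2⟩ := ih hr₀
          exact ⟨a :: u₀', Rm.cons a h1, shEq_cons a h2⟩

/-- interaction of a deletion and a pair-removal -/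
theorem DR {Γ : SimpleGraph V} {x : V × Bool} {t r t₂ : List (V × Bool)}
    (hd : Del Γ x t r) (hr : Rm Γ t t₂) :
    (∃ s, Del Γ x t₂ s ∧ Rm Γ r s) ∨ shEq Γ r (x :: t₂) := by
  induction hd generalizing t₂ with
  | found m =>
      cases hr with
      | head _ hdz =>
          right
          have h := DelFront hdz
          rwa [invL_invL] at h
      | cons _ hr₀ => exact Or.inl ⟨_, Del.found _, hr₀⟩
  | step z hz hd₀ ih =>
      cases hr with
      | head _ hdz =>
          obtain ⟨s₀, hs₁, hs₂⟩ := DelDelC hd₀ hdz hz.1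
          exact Or.inl ⟨s₀, hs₁, Rm.head z hs₂⟩
      | cons _ hr₀ =>
          rcases ih hr₀ with ⟨s₀, hs₁, hs₂⟩ | hsh
          · exact Or.inl ⟨z :: s₀, Del.step z hz hs₁, Rm.cons z hs₂⟩
          · right
            refine shEq_trans (shEq_cons z hsh) ?_
            exact shEq_of_sw (Sw.swap z x _ (pss_symm hz))

/-- local confluence of pair-removal up to shuffles -/
theorem RmRm {Γ : SimpleGraph V} {w u₁ u₂ : List (V × Bool)} (h₁ : Rm Γ w u₁)
    (h₂ : Rm Γ w u₂) :
    shEq Γ u₁ u₂ ∨ ∃ v₁ v₂, Rm Γ u₁ v₁ ∧ Rm Γ u₂ v₂ ∧ shEq Γ v₁ v₂ := by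
  induction h₁ generalizing u₂ with
  | head x hd =>
      cases h₂ with
      | head _ hd₂ => exact Or.inl (DelDet hd hd₂ ▸ shEq_refl Γ _)
      | cons _ hr₂ =>
          rcases DR hd hr₂ with ⟨s, hs₁, hs₂⟩ | hsh
          · exact Or.inr ⟨s, s, hs₂, Rm.head x hs₁, shEq_refl Γ _⟩
          · exact Or.inl hsh
  | cons a hr ih =>
      cases h₂ with
      | head _ hd₂ =>
          rcases DR hd₂ hr with ⟨s, hs₁, hs₂⟩ | hsh
          · exact Or.inr ⟨s, s, Rm.head a hs₁, hs₂, shEq_refl Γ _⟩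
          · exact Or.inl (shEq_symm hsh)
      | cons _ hr₂ =>
          rcases ih hr₂ with hsh | ⟨v₁, v₂, hv₁, hv₂, hsh⟩
          · exact Or.inl (shEq_cons a hsh)
          · exact Or.inr ⟨a :: v₁, a :: v₂, Rm.cons a hv₁, Rm.cons a hv₂, shEq_cons a hsh⟩

end Stmt14


namespace Stmt14

variable {V : Type}

theorem shEq_rtg {Γ : SimpleGraph V} {w u : List (V × Bool)} (h : shEq Γ w u) :
    Relation.ReflTransGen (Sw Γ) w u := by
  induction h with
  | rel _ _ h => exact Relation.ReflTransGen.single h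
  | refl _ => exact Relation.ReflTransGen.refl
  | symm a b hab ih =>
      have hsym : Symmetric (Sw Γ) := fun _ _ h => h.symm
      exact (@Relation.ReflTransGen.symmetric _ _ ⟨hsym⟩).symm _ _ ih
  | trans _ _ _ _ _ ih1 ih2 => exact ih1.trans ih2

/-- transport of pair-removal along shuffle equivalence -/
theorem shEq_Rm_transport {Γ : SimpleGraph V} {w w' u : List (V × Bool)} (h : shEq Γ w w')
    (hr : Rm Γ w u) : ∃ u', Rm Γ w' u' ∧ shEq Γ u u' := by
  have h' := shEq_rtg h
  clear h
  induction h' with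
  | refl => exact ⟨u, hr, shEq_refl Γ _⟩
  | tail hab hbc ih =>
      obtain ⟨u₁, hr₁, hsh₁⟩ := ih
      obtain ⟨u₂, hr₂, hsh₂⟩ := SwRm hbc hr₁
      exact ⟨u₂, hr₂, shEq_trans hsh₁ hsh₂⟩

def shSetoid (Γ : SimpleGraph V) : Setoid (List (V × Bool)) :=
  ⟨shEq Γ, ⟨fun w => shEq_refl Γ w, shEq_symm, shEq_trans⟩⟩

def Qsh (Γ : SimpleGraph V) := Quotient (shSetoid Γ)

def mkQ (Γ : SimpleGraph V) (w : List (V × Bool)) : Qsh Γ := Quotient.mk (shSetoid Γ) w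

def rho (Γ : SimpleGraph V) : Qsh Γ → Qsh Γ → Prop := fun p q =>
  ∃ w u, p = mkQ Γ w ∧ q = mkQ Γ u ∧ Rm Γ w u

theorem rho_local {Γ : SimpleGraph V} (q q₁ q₂ : Qsh Γ) (h₁ : rho Γ q q₁) (h₂ : rho Γ q q₂) :
    ∃ d, Relation.ReflGen (rho Γ) q₁ d ∧ Relation.ReflTransGen (rho Γ) q₂ d := by
  obtain ⟨w₁, u₁, rfl, rfl, hr₁⟩ := h₁
  obtain ⟨w₂, u₂, hq, rfl, hr₂⟩ := h₂
  have hsh : shEq Γ w₂ w₁ := Quotient.exact hq.symm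
  obtain ⟨u₂', hr₂', hshu⟩ := shEq_Rm_transport hsh hr₂
  rcases RmRm hr₁ hr₂' with hsh12 | ⟨v₁, v₂, hv₁, hv₂, hshv⟩
  · refine ⟨mkQ Γ u₁, Relation.ReflGen.refl, ?_⟩
    have : mkQ Γ u₂ = mkQ Γ u₁ :=
      Quotient.sound (shEq_trans hshu (shEq_symm hsh12))
    rw [this]
  · refine ⟨mkQ Γ v₁, Relation.ReflGen.single ⟨u₁, v₁, rfl, rfl, hv₁⟩, ?_⟩
    have h1 : rho Γ (mkQ Γ u₂) (mkQ Γ v₂) := ⟨u₂', v₂, Quotient.sound hshu, rfl, hv₂⟩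
    have h2 : mkQ Γ v₂ = mkQ Γ v₁ := Quotient.sound (shEq_symm hshv)
    exact Relation.ReflTransGen.single (h2 ▸ h1)

theorem cong_join {Γ : SimpleGraph V} {w u : List (V × Bool)} (h : cong Γ w u) :
    Relation.Join (Relation.ReflTransGen (rho Γ)) (mkQ Γ w) (mkQ Γ u) := by
  have hequiv : Equivalence (Relation.Join (Relation.ReflTransGen (rho Γ))) :=
    Relation.equivalence_join_reflTransGen (fun a b c => rho_local a b c)
  induction h with
  | rel a b hab =>
      rcases hab with hs | hr
      · have : mkQ Γ a = mkQ Γ b := Quotient.sound (shEq_of_sw hs)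
        rw [this]; exact hequiv.refl _
      · exact ⟨mkQ Γ b, Relation.ReflTransGen.single ⟨a, b, rfl, rfl, hr⟩,
          Relation.ReflTransGen.refl⟩
  | refl a => exact hequiv.refl _
  | symm _ _ _ ih => exact hequiv.symm ih
  | trans _ _ _ _ _ ih1 ih2 => exact hequiv.trans ih1 ih2

/-- irreducible (reduced) words -/
def Irr (Γ : SimpleGraph V) (w : List (V × Bool)) : Prop := ∀ u, ¬ Rm Γ w u

theorem Irr_shEq {Γ : SimpleGraph V} {w w' : List (V × Bool)} (h : shEq Γ w w')
    (hi : Irr Γ w) : Irr Γ w' := by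
  intro u hr
  obtain ⟨u', hr', _⟩ := shEq_Rm_transport (shEq_symm h) hr
  exact hi u' hr'

theorem rtg_rho_irred {Γ : SimpleGraph V} {w : List (V × Bool)} (hi : Irr Γ w) {q : Qsh Γ}
    (h : Relation.ReflTransGen (rho Γ) (mkQ Γ w) q) : q = mkQ Γ w := by
  rcases Relation.ReflTransGen.cases_head h with heq | ⟨c, hac, _⟩
  · exact heq.symm
  · obtain ⟨w', u', hq, _, hr⟩ := hac
    have hsh : shEq Γ w w' := Quotient.exact hq
    exact absurd hr ((Irr_shEq hsh hi) u')

/-- The shuffle theorem: irreducible words evaluating to the same element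
are shuffle-equivalent. -/
theorem shuffle_theorem {Γ : SimpleGraph V} {w₁ w₂ : List (V × Bool)}
    (h : evalWord Γ w₁ = evalWord Γ w₂) (h₁ : Irr Γ w₁) (h₂ : Irr Γ w₂) : shEq Γ w₁ w₂ := by
  obtain ⟨d, hd₁, hd₂⟩ := cong_join (cong_of_eval_eq h)
  have e₁ := rtg_rho_irred h₁ hd₁
  have e₂ := rtg_rho_irred h₂ hd₂
  exact shEq_symm (Quotient.exact (e₂.symm.trans e₁))

theorem exists_irred_cong (Γ : SimpleGraph V) (w : List (V × Bool)) :
    ∃ w', cong Γ w w' ∧ Irr Γ w' ∧ w'.length ≤ w.length := by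
  classical
  by_cases h : ∃ u, Rm Γ w u
  · obtain ⟨u, hu⟩ := h
    have hlt : u.length < w.length := by have := hu.length; omega
    obtain ⟨w', h1, h2, h3⟩ := exists_irred_cong Γ u
    exact ⟨w', Relation.EqvGen.trans _ _ _ (Relation.EqvGen.rel _ _ (Or.inr hu)) h1, h2,
      by omega⟩
  · exact ⟨w, Relation.EqvGen.refl _, fun u hu => h ⟨u, hu⟩, le_refl _⟩
termination_by w.length
decreasing_by exact hlt

theorem irred_length {Γ : SimpleGraph V} {w : List (V × Bool)} {g : RAAG Γ}
    (hi : Irr Γ w) (he : evalWord Γ w = g) : w.length = wlen Γ g := by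
  refine le_antisymm ?_ (wlen_le Γ he)
  obtain ⟨w₀, hw₀, hl₀⟩ := exists_geodesic Γ g
  obtain ⟨w₀', hc, hi', hle⟩ := exists_irred_cong Γ w₀
  have he' : evalWord Γ w₀' = g := by rw [← hc.eval, hw₀]
  have hsh := shuffle_theorem (he.trans he'.symm) hi hi'
  rw [hsh.length]
  omega

theorem geodesic_irred {Γ : SimpleGraph V} {w : List (V × Bool)}
    (hg : w.length = wlen Γ (evalWord Γ w)) : Irr Γ w := by
  intro u hu
  have h1 : evalWord Γ u = evalWord Γ w := hu.eval.symm
  have h2 := wlen_le Γ h1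
  have h3 := hu.length
  omega

end Stmt14


namespace Stmt14

variable {V : Type}

inductive Front (Γ : SimpleGraph V) (l : V × Bool) : List (V × Bool) → Prop
  | head (t : List (V × Bool)) : Front Γ l (l :: t)
  | deeper (z : V × Bool) {t : List (V × Bool)} (h : pss Γ l z) (hf : Front Γ l t) :
      Front Γ l (z :: t)

theorem Front_sw {Γ : SimpleGraph V} {l : V × Bool} {w w' : List (V × Bool)} (hs : Sw Γ w w')
    (hf : Front Γ l w) : Front Γ l w' := by
  induction hs with
  | swap x y t hxy =>
      cases hf with
      | head =>
          exact Front.deeper y hxy (Front.head t)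
      | deeper _ hlx hf₀ =>
          cases hf₀ with
          | head => exact Front.head _
          | deeper _ hly hf₁ => exact Front.deeper y hly (Front.deeper x hlx hf₁)
  | cons a hst ih =>
      cases hf with
      | head => exact Front.head _
      | deeper _ hla hf₀ => exact Front.deeper a hla (ih hf₀)

theorem Front_shEq {Γ : SimpleGraph V} {l : V × Bool} {w w' : List (V × Bool)}
    (h : shEq Γ w w') (hf : Front Γ l w) : Front Γ l w' := by
  have h' := shEq_rtg h
  clear h
  induction h' with
  | refl => exact hf
  | tail _ hbc ih => exact Front_sw hbc ih

theorem Front_extract {Γ : SimpleGraph V} {l : V × Bool} {w : List (V × Bool)}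
    (hf : Front Γ l w) : ∃ w', shEq Γ w (l :: w') ∧ w'.length + 1 = w.length := by
  induction hf with
  | head t => exact ⟨t, shEq_refl Γ _, rfl⟩
  | deeper z hz _ ih =>
      obtain ⟨w', hsh, hlen⟩ := ih
      refine ⟨z :: w', ?_, by simpa using hlen⟩
      refine shEq_trans (shEq_cons z hsh) ?_
      exact shEq_of_sw (Sw.swap z l _ (pss_symm hz))

theorem Front_append_cases {Γ : SimpleGraph V} {l : V × Bool} {A B : List (V × Bool)}
    (hf : Front Γ l (A ++ B)) :
    Front Γ l A ∨ ((∀ z ∈ A, pss Γ l z) ∧ Front Γ l B) := by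
  induction A with
  | nil => exact Or.inr ⟨by simp, hf⟩
  | cons a A' ih =>
      cases hf with
      | head => exact Or.inl (Front.head _)
      | deeper _ hla hf₀ =>
          rcases ih hf₀ with h | ⟨hall, hB⟩
          · exact Or.inl (Front.deeper a hla h)
          · refine Or.inr ⟨?_, hB⟩
            intro z hz
            rcases List.mem_cons.mp hz with rfl | hz
            · exact hla
            · exact hall z hz

/-- `l` is a starting letter of `g` -/
def SL (Γ : SimpleGraph V) (g : RAAG Γ) (l : V × Bool) : Prop :=
  ∃ d, evalWord Γ (l :: d) = g ∧ (l :: d).length = wlen Γ g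

theorem geodesic_split {Γ : SimpleGraph V} {p q : List (V × Bool)}
    (h : (p ++ q).length = wlen Γ (evalWord Γ (p ++ q))) :
    p.length = wlen Γ (evalWord Γ p) ∧ q.length = wlen Γ (evalWord Γ q) := by
  have h1 : wlen Γ (evalWord Γ (p ++ q)) ≤ wlen Γ (evalWord Γ p) + wlen Γ (evalWord Γ q) := by
    rw [evalWord_append]
    exact wlen_mul_le Γ _ _
  have h2 : wlen Γ (evalWord Γ p) ≤ p.length := wlen_le Γ rfl
  have h3 : wlen Γ (evalWord Γ q) ≤ q.length := wlen_le Γ rfl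
  have h4 : (p ++ q).length = p.length + q.length := List.length_append
  omega

theorem SL_of_front {Γ : SimpleGraph V} {w : List (V × Bool)} {l : V × Bool}
    (hg : w.length = wlen Γ (evalWord Γ w)) (hf : Front Γ l w) : SL Γ (evalWord Γ w) l := by
  obtain ⟨w', hsh, hlen⟩ := Front_extract hf
  refine ⟨w', hsh.eval.symm, ?_⟩
  have := hsh.length
  simp only [List.length_cons] at this ⊢
  omega

/-- The key starting-letter lemma for geodesic products. -/
theorem KEY {Γ : SimpleGraph V} {w₁ w₂ : List (V × Bool)} {x y : RAAG Γ}
    (he₁ : evalWord Γ w₁ = x) (he₂ : evalWord Γ w₂ = y)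
    (hl₁ : w₁.length = wlen Γ x) (hl₂ : w₂.length = wlen Γ y)
    (hg : wlen Γ (x * y) = wlen Γ x + wlen Γ y) {l : V × Bool} (hl : SL Γ (x * y) l) :
    SL Γ x l ∨ ((∀ z ∈ w₁, pss Γ l z) ∧ SL Γ y l) := by
  obtain ⟨d, hd, hdl⟩ := hl
  have hcat_ev : evalWord Γ (w₁ ++ w₂) = x * y := by rw [evalWord_append, he₁, he₂]
  have hcat_len : (w₁ ++ w₂).length = wlen Γ (x * y) := by
    rw [List.length_append, hg, hl₁, hl₂]
  have hi₁ : Irr Γ (l :: d) := geodesic_irred (by rw [hd]; exact hdl)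
  have hi₂ : Irr Γ (w₁ ++ w₂) := geodesic_irred (by rw [hcat_ev]; exact hcat_len)
  have hsh : shEq Γ (l :: d) (w₁ ++ w₂) := shuffle_theorem (by rw [hd, hcat_ev]) hi₁ hi₂
  have hfront : Front Γ l (w₁ ++ w₂) := Front_shEq hsh (Front.head d)
  rcases Front_append_cases hfront with hf | ⟨hall, hf⟩
  · left
    have := SL_of_front (by rw [he₁]; exact hl₁) hf
    rwa [he₁] at this
  · right
    refine ⟨hall, ?_⟩
    have := SL_of_front (by rw [he₂]; exact hl₂) hf
    rwa [he₂] at this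

end Stmt14


namespace Stmt14

variable {V : Type}

theorem letterLT_irrefl (lo : LinearOrder V) (x : V × Bool) : ¬ letterLT lo x x := by
  letI := lo
  rintro (h | ⟨-, h1, h2⟩)
  · exact lt_irrefl _ h
  · rw [h1] at h2; exact Bool.true_eq_false.mp h2

theorem letterLT_asymm (lo : LinearOrder V) {x y : V × Bool} (h : letterLT lo x y)
    (h' : letterLT lo y x) : False := by
  letI := lo
  rcases h with h | ⟨he, h1, h2⟩ <;> rcases h' with h' | ⟨he', h1', h2'⟩
  · exact lt_irrefl _ (lt_trans h h')
  · rw [he'] at h; exact lt_irrefl _ h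
  · rw [he] at h'; exact lt_irrefl _ h'
  · rw [h1] at h2'; exact Bool.true_eq_false.mp h2'

theorem lex_asymm {α : Type*} {r : α → α → Prop} (hr : ∀ a b, r a b → r b a → False) :
    ∀ {l₁ l₂ : List α}, List.Lex r l₁ l₂ → List.Lex r l₂ l₁ → False := by
  intro l₁ l₂ h₁
  induction h₁ with
  | nil => intro h₂; cases h₂
  | rel hab =>
      intro h₂
      cases h₂ with
      | rel hba => exact hr _ _ hab hba
      | cons h => exact hr _ _ hab hab
  | cons h ih =>
      intro h₂
      cases h₂ with
      | rel hba => exact hr _ _ hba hba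
      | cons h' => exact ih h'

theorem lex_append {α : Type*} {r : α → α → Prop} {x y : α} (h : r x y) :
    ∀ (c : List α) (s t : List α), List.Lex r (c ++ x :: s) (c ++ y :: t) := by
  intro c
  induction c with
  | nil => exact fun s t => List.Lex.rel h
  | cons a c ih => exact fun s t => List.Lex.cons (ih s t)

theorem lex_split {α : Type*} {r : α → α → Prop} :
    ∀ {u w : List α}, List.Lex r u w → u.length = w.length →
      ∃ p x s y t, u = p ++ x :: s ∧ w = p ++ y :: t ∧ r x y := by
  intro u w h
  induction h with
  | nil => intro h; simp at h
  | @rel a l₁ b l₂ hab => exact fun _ => ⟨[], a, l₁, b, l₂, rfl, rfl, hab⟩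
  | @cons a l₁ l₂ h ih =>
      intro hlen
      simp only [List.length_cons, Nat.add_right_cancel_iff] at hlen
      obtain ⟨p, x, s, y, t, h1, h2, h3⟩ := ih hlen
      exact ⟨a :: p, x, s, y, t, by rw [h1]; rfl, by rw [h2]; rfl, h3⟩

theorem append_suffix_cases {α : Type*} {A B p s : List α} {x : α}
    (h : A ++ B = p ++ x :: s) :
    (∃ s₁, A = p ++ x :: s₁ ∧ s = s₁ ++ B) ∨ (∃ p', p = A ++ p' ∧ B = p' ++ x :: s) := by
  rcases List.append_eq_append_iff.mp h with ⟨a', h1, h2⟩ | ⟨c', h1, h2⟩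
  · exact Or.inr ⟨a', h1, h2.symm ▸ rfl⟩
  · cases c' with
    | nil =>
        right
        refine ⟨[], ?_, ?_⟩
        · simp only [List.append_nil] at h1
          rw [h1, List.append_nil]
        · simp only [List.nil_append] at h2
          rw [← h2]
          rfl
    | cons hd tl =>
        left
        simp only [List.cons_append] at h2
        injection h2 with h2a h2b
        exact ⟨tl, by rw [h1, ← h2a], h2b⟩

/-- MAXHEAD: heads of suffixes of a normal form dominate all starting letters. -/
theorem MAXHEAD {Γ : SimpleGraph V} {lo : LinearOrder V} {N N₁ N₂ : List (V × Bool)}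
    {x : V × Bool} {gN : RAAG Γ} (hN : NormalForm Γ lo N gN) (hdec : N = N₁ ++ x :: N₂)
    {l : V × Bool} (hSL : SL Γ (evalWord Γ (x :: N₂)) l) : ¬ letterLT lo x l := by
  obtain ⟨hev, hlen, hmax⟩ := hN
  intro hlt
  have hgeod : (N₁ ++ x :: N₂).length = wlen Γ (evalWord Γ (N₁ ++ x :: N₂)) := by
    rw [← hdec, hev]; exact hlen
  have hsplit := (geodesic_split hgeod).2
  obtain ⟨d, hd, hdl⟩ := hSL
  have hN'ev : evalWord Γ (N₁ ++ l :: d) = gN := by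
    rw [evalWord_append, hd, ← evalWord_append, ← hdec, hev]
  have hN'len : (N₁ ++ l :: d).length = wlen Γ gN := by
    have e1 : (l :: d).length = (x :: N₂).length := by rw [hdl, ← hsplit]
    rw [List.length_append, e1, ← List.length_append, ← hdec, hlen]
  rcases hmax _ hN'ev hN'len with heq | hlex
  · have : l :: d = x :: N₂ := by
      rw [hdec] at heq
      exact List.append_cancel_left heq
    have hx : l = x := (List.cons.injEq _ _ _ _ ▸ this).1
    rw [hx] at hlt
    exact letterLT_irrefl lo x hlt
  · rw [hdec] at hlex
    exact lex_asymm (fun a b => letterLT_asymm lo) (lex_append hlt N₁ N₂ d) hlex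

/-- support is the set of generators of any fixed geodesic word -/
theorem supp_eq {Γ : SimpleGraph V} {wg : List (V × Bool)} {g : RAAG Γ}
    (hev : evalWord Γ wg = g) (hlen : wg.length = wlen Γ g) (v : V) :
    v ∈ Supp Γ g ↔ v ∈ wg.map Prod.fst := by
  constructor
  · rintro ⟨w', hw', hlen', hmem⟩
    have hsh : shEq Γ w' wg :=
      shuffle_theorem (by rw [hw', hev]) (geodesic_irred (by rw [hw']; exact hlen'))
        (geodesic_irred (by rw [hev]; exact hlen))
    exact (hsh.perm.map Prod.fst).mem_iff.mp hmem
  · intro hmem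
    exact ⟨wg, hev, hlen, hmem⟩

/-- a starting letter gives an element of `SGen` -/
theorem SL_SGen {Γ : SimpleGraph V} {g : RAAG Γ} {l : V × Bool} (h : SL Γ g l) :
    l.1 ∈ SGen Γ g := by
  obtain ⟨d, hd, hdl⟩ := h
  have hsplit := (geodesic_split (p := [l]) (q := d) (by
    simpa using (by rw [hd]; exact hdl : (l :: d).length = wlen Γ (evalWord Γ (l :: d))))).2
  refine ⟨l.2, evalWord Γ d, ?_, ?_⟩
  · rw [← hd, evalWord_cons]
  · rw [← hd]
    have : (l :: d).length = wlen Γ (evalWord Γ (l :: d)) := by rw [hd]; exact hdl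
    simp only [List.length_cons] at this
    omega

theorem wlen_pow_le (Γ : SimpleGraph V) (g : RAAG Γ) (k : ℕ) :
    wlen Γ (g ^ k) ≤ k * wlen Γ g := by
  induction k with
  | zero =>
      simp only [pow_zero, Nat.zero_mul, Nat.le_zero]
      have : evalWord Γ [] = (1 : RAAG Γ) := evalWord_nil Γ
      have := wlen_le Γ this
      simpa using this
  | succ k ih =>
      have h1 : g ^ (k + 1) = g ^ k * g := pow_succ g k
      rw [h1]
      calc wlen Γ (g ^ k * g) ≤ wlen Γ (g ^ k) + wlen Γ g := wlen_mul_le Γ _ _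
        _ ≤ k * wlen Γ g + wlen Γ g := by omega
        _ = (k + 1) * wlen Γ g := by ring

theorem eval_join_replicate {Γ : SimpleGraph V} {wg : List (V × Bool)} {g : RAAG Γ}
    (hev : evalWord Γ wg = g) (k : ℕ) :
    evalWord Γ (List.replicate k wg).flatten = g ^ k := by
  induction k with
  | zero => simp [evalWord_nil]
  | succ k ih =>
      show evalWord Γ (wg :: List.replicate k wg).flatten = g ^ (k + 1)
      rw [List.flatten_cons, evalWord_append, hev]
      show g * evalWord Γ (List.replicate k wg).flatten = g ^ (k + 1)
      rw [ih, ← pow_succ']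

theorem length_join_replicate {α : Type*} (k : ℕ) (wg : List α) :
    ((List.replicate k wg).flatten).length = k * wg.length := by
  induction k with
  | zero => simp
  | succ k ih =>
      show ((wg :: List.replicate k wg).flatten).length = (k + 1) * wg.length
      rw [List.flatten_cons, List.length_append]
      show wg.length + ((List.replicate k wg).flatten).length = (k + 1) * wg.length
      rw [ih]; ring

end Stmt14


namespace Stmt14

variable {V : Type}

theorem region_cases {wg wgb : List (V × Bool)} :
    ∀ (k : ℕ) (p : List (V × Bool)) (x : V × Bool) (s : List (V × Bool)),
      (List.replicate k wg).flatten ++ wgb = p ++ x :: s →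
      (∃ wg₁ s₁ m, wg = wg₁ ++ x :: s₁ ∧ m < k ∧
        x :: s = (x :: s₁) ++ ((List.replicate m wg).flatten ++ wgb)) ∨
      (∃ wgb₁, wgb = wgb₁ ++ x :: s) := by
  intro k
  induction k with
  | zero =>
      intro p x s h
      right
      exact ⟨p, by simpa using h⟩
  | succ k ih =>
      intro p x s h
      have h' : wg ++ ((List.replicate k wg).flatten ++ wgb) = p ++ x :: s := by
        have e : (List.replicate (k + 1) wg).flatten = wg ++ (List.replicate k wg).flatten := by
          show ((wg :: List.replicate k wg).flatten) = _
          rw [List.flatten_cons]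
        rw [e, List.append_assoc] at h
        exact h
      rcases append_suffix_cases h' with ⟨s₁, hA, hs⟩ | ⟨p', hp, hB⟩
      · left
        exact ⟨p, s₁, k, hA, Nat.lt_succ_self k, by rw [hs]; rfl⟩
      · rcases ih p' x s hB with ⟨wg₁, s₁, m, h1, h2, h3⟩ | hres
        · exact Or.inl ⟨wg₁, s₁, m, h1, by omega, h3⟩
        · exact Or.inr hres

theorem LEMGPOW {Γ : SimpleGraph V} {g b : RAAG Γ} {wg : List (V × Bool)} {v₀ : V}
    (hwg_ev : evalWord Γ wg = g) (hwg_len : wg.length = wlen Γ g)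
    (hSG : SGen Γ g = {v₀})
    (hsns2 : ¬ ∃ v : V, v ∉ Supp Γ g ∧ ∀ u ∈ Supp Γ g, ¬ Γ.Adj v u)
    {m : ℕ} (hgm : wlen Γ (g ^ (m + 1) * b) = (m + 1) * wlen Γ g + wlen Γ b)
    (hgm' : wlen Γ (g ^ m * b) = m * wlen Γ g + wlen Γ b)
    {l : V × Bool} (hl : SL Γ (g ^ (m + 1) * b) l) : l.1 = v₀ := by
  obtain ⟨wb, hwb_ev, hwb_len⟩ := exists_geodesic Γ b
  set w₂ : List (V × Bool) := (List.replicate m wg).flatten ++ wb with hw₂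
  have hY_ev : evalWord Γ w₂ = g ^ m * b := by
    rw [hw₂, evalWord_append, eval_join_replicate hwg_ev, hwb_ev]
  have hY_len : w₂.length = wlen Γ (g ^ m * b) := by
    rw [hw₂, List.length_append, length_join_replicate, hwg_len, hwb_len, hgm']
  have hcast : g ^ (m + 1) * b = g * (g ^ m * b) := by
    rw [pow_succ', mul_assoc]
  have hg' : wlen Γ (g * (g ^ m * b)) = wlen Γ g + wlen Γ (g ^ m * b) := by
    rw [← hcast, hgm, hgm']
    ring
  have hl' : SL Γ (g * (g ^ m * b)) l := by rwa [hcast] at hl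
  rcases KEY hwg_ev hY_ev hwg_len hY_len hg' hl' with hSLg | ⟨hall, _⟩
  · have hmem := SL_SGen hSLg
    rw [hSG] at hmem
    exact hmem
  · exfalso
    apply hsns2
    refine ⟨l.1, ?_, ?_⟩
    · intro hv
      obtain ⟨z, hz, hz1⟩ := List.mem_map.mp ((supp_eq hwg_ev hwg_len _).mp hv)
      exact (hall z hz).1 hz1.symm
    · intro u' hu'
      obtain ⟨z, hz, hz1⟩ := List.mem_map.mp ((supp_eq hwg_ev hwg_len _).mp hu')
      rw [← hz1]
      exact (hall z hz).2

end Stmt14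


open Stmt14

theorem stmt14 {V : Type} (Γ : SimpleGraph V) (lo : LinearOrder V)
    (a g b : RAAG Γ) (n : ℕ) (hn : 1 ≤ n)
    (hgeo : wlen Γ (a * g ^ n * b) = wlen Γ a + n * wlen Γ g + wlen Γ b)
    (hsns : StronglyNonSplit Γ g) (hsd : SDConical Γ lo g)
    (w wa wg wgb : List (V × Bool))
    (hw : NormalForm Γ lo w (a * g ^ n * b))
    (hwa : NormalForm Γ lo wa a) (hwg : NormalForm Γ lo wg g)
    (hwgb : NormalForm Γ lo wgb (g * b)) :
    w = wa ++ (List.replicate (n - 1) wg).flatten ++ wgb := by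
  classical
  obtain ⟨v₀, hSG, hSD⟩ := hsd
  have hsplitprod : ∀ k, k ≤ n → a * g ^ n * b = (a * g ^ (n - k)) * (g ^ k * b) := by
    intro k hk
    have h : g ^ n = g ^ (n - k) * g ^ k := by
      rw [← pow_add]
      congr 1
      omega
    rw [h, ← mul_assoc a (g ^ (n - k)) (g ^ k), mul_assoc (a * g ^ (n - k))]
  have d1 : ∀ k, k ≤ n → wlen Γ (g ^ k * b) = k * wlen Γ g + wlen Γ b := by
    intro k hk
    have hub1 : wlen Γ (g ^ k * b) ≤ wlen Γ (g ^ k) + wlen Γ b := wlen_mul_le Γ _ _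
    have hub2 : wlen Γ (g ^ k) ≤ k * wlen Γ g := wlen_pow_le Γ g k
    have h1 : wlen Γ (a * g ^ n * b) ≤ wlen Γ (a * g ^ (n - k)) + wlen Γ (g ^ k * b) := by
      rw [hsplitprod k hk]
      exact wlen_mul_le Γ _ _
    have h2a : wlen Γ (a * g ^ (n - k)) ≤ wlen Γ a + wlen Γ (g ^ (n - k)) := wlen_mul_le Γ _ _
    have h2b : wlen Γ (g ^ (n - k)) ≤ (n - k) * wlen Γ g := wlen_pow_le Γ g (n - k)
    have hmulsplit : (n - k) * wlen Γ g + k * wlen Γ g = n * wlen Γ g := by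
      rw [← add_mul]
      congr 1
      omega
    omega
  have dGB : wlen Γ (g * b) = wlen Γ g + wlen Γ b := by
    have := d1 1 hn
    rw [pow_one] at this
    simpa using this
  have halg : g ^ (n - 1) * (g * b) = g ^ n * b := by
    rw [← mul_assoc, ← pow_succ]
    have : n - 1 + 1 = n := by omega
    rw [this]
  set J : List (V × Bool) := (List.replicate (n - 1) wg).flatten with hJ
  have hJev : evalWord Γ J = g ^ (n - 1) := eval_join_replicate hwg.1 (n - 1)
  have hJlen : J.length = (n - 1) * wlen Γ g := by
    rw [hJ, length_join_replicate, hwg.2.1]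
  have hYev : evalWord Γ (J ++ wgb) = g ^ n * b := by
    rw [evalWord_append, hJev, hwgb.1, halg]
  have hnsplit : (n - 1) * wlen Γ g + wlen Γ g = n * wlen Γ g := by
    have h : (n - 1) * wlen Γ g + 1 * wlen Γ g = ((n - 1) + 1) * wlen Γ g := (add_mul _ _ _).symm
    have h2 : n - 1 + 1 = n := by omega
    rw [h2] at h
    omega
  have hYlen : (J ++ wgb).length = wlen Γ (g ^ n * b) := by
    rw [List.length_append, hJlen, hwgb.2.1, dGB, d1 n le_rfl]
    omega
  have hu_ev : evalWord Γ (wa ++ (J ++ wgb)) = a * g ^ n * b := by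
    rw [evalWord_append, hwa.1, hYev, mul_assoc]
  have hu_len : (wa ++ (J ++ wgb)).length = wlen Γ (a * g ^ n * b) := by
    rw [List.length_append, hwa.2.1, hYlen, d1 n le_rfl, hgeo]
    omega
  rcases hw.2.2 (wa ++ (J ++ wgb)) hu_ev hu_len with heq | hlex
  · rw [List.append_assoc]
    exact heq.symm
  · exfalso
    obtain ⟨p, x, s, y, t, hu_dec, hw_dec, hxy⟩ :=
      lex_split hlex (by rw [hu_len, hw.2.1])
    have hu_geod : (wa ++ (J ++ wgb)).length = wlen Γ (evalWord Γ (wa ++ (J ++ wgb))) := by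
      rw [hu_ev]
      exact hu_len
    have hw_geod : w.length = wlen Γ (evalWord Γ w) := by rw [hw.1]; exact hw.2.1
    have hxs_geod : (x :: s).length = wlen Γ (evalWord Γ (x :: s)) :=
      (geodesic_split (by rw [← hu_dec]; exact hu_geod)).2
    have hyt_geod : (y :: t).length = wlen Γ (evalWord Γ (y :: t)) :=
      (geodesic_split (by rw [← hw_dec]; exact hw_geod)).2
    have hh : evalWord Γ (y :: t) = evalWord Γ (x :: s) := by
      have he : evalWord Γ (wa ++ (J ++ wgb)) = evalWord Γ w := by rw [hu_ev, hw.1]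
      rw [hu_dec, hw_dec, evalWord_append, evalWord_append] at he
      exact (mul_left_cancel he).symm
    have hySL : SL Γ (evalWord Γ (x :: s)) y := ⟨t, hh, by rw [hyt_geod, hh]⟩
    have final_contra : pss Γ y x → y.1 = v₀ → False := by
      intro hpss hy1
      rcases hxy with hlt | ⟨heq, _, _⟩
      · rw [hy1] at hlt
        have hadj := hSD x.1 hlt
        rw [← hy1] at hadj
        exact hpss.2 hadj.symm
      · exact hpss.1 heq.symm
    rcases append_suffix_cases hu_dec with ⟨s₁, hwa_dec, hs⟩ | ⟨p', hp, hrest⟩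
    · -- CASE A : split point inside wa
      have hxs_eq : x :: s = (x :: s₁) ++ (J ++ wgb) := by rw [hs]; rfl
      have hXgeod : (x :: s₁).length = wlen Γ (evalWord Γ (x :: s₁)) :=
        (geodesic_split (by rw [← hwa_dec, hwa.1]; exact hwa.2.1)).2
      have hprod : evalWord Γ (x :: s) = evalWord Γ (x :: s₁) * (g ^ n * b) := by
        rw [hxs_eq, evalWord_append, hYev]
      have hg' : wlen Γ (evalWord Γ (x :: s₁) * (g ^ n * b)) =
          wlen Γ (evalWord Γ (x :: s₁)) + wlen Γ (g ^ n * b) := by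
        have h1 : (x :: s).length = (x :: s₁).length + (J ++ wgb).length := by
          rw [hxs_eq, List.length_append]
        rw [← hprod, ← hxs_geod, h1, hXgeod, hYlen]
      have hSL' : SL Γ (evalWord Γ (x :: s₁) * (g ^ n * b)) y := hprod ▸ hySL
      rcases KEY rfl hYev hXgeod hYlen hg' hSL' with hSLX | ⟨hall, hSLY⟩
      · exact MAXHEAD hwa hwa_dec hSLX hxy
      · have hpss : pss Γ y x := hall x (List.mem_cons_self)
        have hn' : n - 1 + 1 = n := by omega
        have hSLY' : SL Γ (g ^ (n - 1 + 1) * b) y := by rw [hn']; exact hSLY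
        have hy1 : y.1 = v₀ :=
          LEMGPOW hwg.1 hwg.2.1 hSG hsns.2 (by rw [hn']; exact d1 n le_rfl)
            (d1 (n - 1) (by omega)) hSLY'
        exact final_contra hpss hy1
    · -- split point inside J ++ wgb
      rcases region_cases (n - 1) p' x s hrest with
        ⟨wg₁, s₁, m, hwg_dec, hm, hxs_eq⟩ | ⟨wgb₁, hwgb_dec⟩
      · -- CASE B : inside a copy of wg
        have hm1n : m + 1 ≤ n := by omega
        have hXgeod : (x :: s₁).length = wlen Γ (evalWord Γ (x :: s₁)) :=
          (geodesic_split (by rw [← hwg_dec, hwg.1]; exact hwg.2.1)).2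
        have hY2ev : evalWord Γ ((List.replicate m wg).flatten ++ wgb) = g ^ (m + 1) * b := by
          rw [evalWord_append, eval_join_replicate hwg.1, hwgb.1, ← mul_assoc, ← pow_succ]
        have hY2len : ((List.replicate m wg).flatten ++ wgb).length =
            wlen Γ (g ^ (m + 1) * b) := by
          rw [List.length_append, length_join_replicate, hwg.2.1, hwgb.2.1, dGB,
            d1 (m + 1) hm1n]
          have : m * wlen Γ g + wlen Γ g = (m + 1) * wlen Γ g := by ring
          omega
        have hprod : evalWord Γ (x :: s) =
            evalWord Γ (x :: s₁) * (g ^ (m + 1) * b) := by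
          rw [hxs_eq, evalWord_append, hY2ev]
        have hg' : wlen Γ (evalWord Γ (x :: s₁) * (g ^ (m + 1) * b)) =
            wlen Γ (evalWord Γ (x :: s₁)) + wlen Γ (g ^ (m + 1) * b) := by
          have h1 : (x :: s).length =
              (x :: s₁).length + ((List.replicate m wg).flatten ++ wgb).length := by
            rw [hxs_eq, List.length_append]
          rw [← hprod, ← hxs_geod, h1, hXgeod, hY2len]
        have hSL' : SL Γ (evalWord Γ (x :: s₁) * (g ^ (m + 1) * b)) y := hprod ▸ hySL
        rcases KEY rfl hY2ev hXgeod hY2len hg' hSL' with hSLX | ⟨hall, hSLY⟩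
        · exact MAXHEAD hwg hwg_dec hSLX hxy
        · have hpss : pss Γ y x := hall x (List.mem_cons_self)
          have hy1 : y.1 = v₀ :=
            LEMGPOW hwg.1 hwg.2.1 hSG hsns.2 (d1 (m + 1) hm1n) (d1 m (by omega)) hSLY
          exact final_contra hpss hy1
      · -- CASE C : inside wgb
        exact MAXHEAD hwgb hwgb_dec hySL hxy
end

section
/- In a right-angled Artin group G(Γ), if a g^n b is a geodesic decomposition of some element h with n ≥ 2, then g is cyclically reduced. -/
namespace Stmt19Aux

attribute [local instance] Classical.propDecidable

variable {V : Type} (Γ : SimpleGraph V)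

/-- Inverse of a letter. -/
def linv (l : V × Bool) : V × Bool := (l.1, !l.2)

@[simp] lemma linv_linv (l : V × Bool) : linv (linv l) = l := by
  cases l with | mk v b => cases b <;> rfl

@[simp] lemma linv_fst (l : V × Bool) : (linv l).1 = l.1 := rfl

lemma linv_ne (l : V × Bool) : linv l ≠ l := by
  cases l with | mk v b => cases b <;> simp [linv]

/-- Independence (commutation) of letters. -/
def Ind (x m : V × Bool) : Prop := x.1 ≠ m.1 ∧ ¬ Γ.Adj x.1 m.1

lemma Ind.symm {x m : V × Bool} (h : Ind Γ x m) : Ind Γ m x :=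
  ⟨Ne.symm h.1, fun a => h.2 a.symm⟩

@[simp] lemma ind_linv_right {x m : V × Bool} : Ind Γ x (linv m) ↔ Ind Γ x m := Iff.rfl

@[simp] lemma ind_linv_left {x m : V × Bool} : Ind Γ (linv x) m ↔ Ind Γ x m := Iff.rfl

lemma not_ind_linv_self (x : V × Bool) : ¬ Ind Γ x (linv x) := fun h => h.1 rfl

lemma ne_linv_of_ind {x m : V × Bool} (h : Ind Γ x m) : m ≠ linv x := by
  intro e; exact h.1 (by rw [e]; rfl)

@[simp] lemma evalWord_nil : evalWord Γ ([] : List (V × Bool)) = 1 := rfl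

@[simp] lemma evalWord_cons (l : V × Bool) (t : List (V × Bool)) :
    evalWord Γ (l :: t) = raagLetter Γ l * evalWord Γ t := by
  simp [evalWord]

@[simp] lemma evalWord_append (s t : List (V × Bool)) :
    evalWord Γ (s ++ t) = evalWord Γ s * evalWord Γ t := by
  simp [evalWord]

@[simp] lemma raagLetter_linv (l : V × Bool) :
    raagLetter Γ (linv l) = (raagLetter Γ l)⁻¹ := by
  cases l with | mk v b => cases b <;> simp [raagLetter, linv]

lemma raag_gen_commute {v w : V} (hne : v ≠ w) (hadj : ¬ Γ.Adj v w) :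
    Commute (raagGen Γ v) (raagGen Γ w) := by
  have hrel : (FreeGroup.of v * FreeGroup.of w * (FreeGroup.of v)⁻¹ * (FreeGroup.of w)⁻¹ :
      FreeGroup V) ∈ Subgroup.normalClosure (raagRels Γ) :=
    Subgroup.subset_normalClosure ⟨v, w, hne, hadj, rfl⟩
  have h1 : (QuotientGroup.mk (FreeGroup.of v * FreeGroup.of w * (FreeGroup.of v)⁻¹ *
      (FreeGroup.of w)⁻¹) : PresentedGroup (raagRels Γ)) = 1 :=
    (QuotientGroup.eq_one_iff _).mpr hrel
  have h2 : raagGen Γ v * raagGen Γ w * (raagGen Γ v)⁻¹ * (raagGen Γ w)⁻¹ = 1 := by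
    have h3 : PresentedGroup.mk (raagRels Γ) (FreeGroup.of v * FreeGroup.of w *
        (FreeGroup.of v)⁻¹ * (FreeGroup.of w)⁻¹) = 1 := h1
    simpa only [raagGen, PresentedGroup.of, map_mul, map_inv] using h3
  show raagGen Γ v * raagGen Γ w = raagGen Γ w * raagGen Γ v
  calc raagGen Γ v * raagGen Γ w
      = (raagGen Γ v * raagGen Γ w * (raagGen Γ v)⁻¹ * (raagGen Γ w)⁻¹) *
        (raagGen Γ w * raagGen Γ v) := by group
    _ = raagGen Γ w * raagGen Γ v := by rw [h2]; group

lemma letter_commute {x m : V × Bool} (h : Ind Γ x m) :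
    Commute (raagLetter Γ x) (raagLetter Γ m) := by
  have base : Commute (raagGen Γ x.1) (raagGen Γ m.1) := raag_gen_commute Γ h.1 h.2
  cases x with | mk v b => cases m with | mk w c =>
    cases b <;> cases c <;>
      simp only [raagLetter] <;>
      first
        | exact base
        | exact base.inv_left
        | exact base.inv_right
        | exact base.inv_left.inv_right

end Stmt19Aux
namespace Stmt19Aux

variable {V : Type} (Γ : SimpleGraph V)

/-- One shuffle (swap of adjacent independent letters). -/
inductive SStep : List (V × Bool) → List (V × Bool) → Prop
  | swap (l m : V × Bool) (h : Ind Γ l m) (t : List (V × Bool)) :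
      SStep (l :: m :: t) (m :: l :: t)
  | cons (a : V × Bool) {t t' : List (V × Bool)} : SStep t t' → SStep (a :: t) (a :: t')

/-- Shuffle equivalence. -/
def SEq (w w' : List (V × Bool)) : Prop := Relation.ReflTransGen (SStep Γ) w w'

variable {Γ}

lemma SStep.symm {w w' : List (V × Bool)} (h : SStep Γ w w') : SStep Γ w' w := by
  induction h with
  | swap l m h t => exact SStep.swap m l (h.symm) t
  | cons a _ ih => exact SStep.cons a ih

lemma SEq.refl (w : List (V × Bool)) : SEq Γ w w := Relation.ReflTransGen.refl

lemma SEq.trans {w₁ w₂ w₃ : List (V × Bool)} (h : SEq Γ w₁ w₂) (h' : SEq Γ w₂ w₃) :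
    SEq Γ w₁ w₃ := Relation.ReflTransGen.trans h h'

lemma SEq.symm {w w' : List (V × Bool)} (h : SEq Γ w w') : SEq Γ w' w := by
  induction h with
  | refl => exact SEq.refl _
  | tail _ h ih => exact Relation.ReflTransGen.trans (Relation.ReflTransGen.single h.symm) ih

lemma SEq.single {w w' : List (V × Bool)} (h : SStep Γ w w') : SEq Γ w w' :=
  Relation.ReflTransGen.single h

lemma SEq.cons (a : V × Bool) {t t' : List (V × Bool)} (h : SEq Γ t t') :
    SEq Γ (a :: t) (a :: t') := by
  induction h with
  | refl => exact SEq.refl _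
  | tail _ h ih => exact ih.trans (SEq.single (SStep.cons a h))

lemma SEq.appendLeft (c : List (V × Bool)) {t t' : List (V × Bool)} (h : SEq Γ t t') :
    SEq Γ (c ++ t) (c ++ t') := by
  induction c with
  | nil => exact h
  | cons a c ih => exact SEq.cons a ih

lemma SStep.appendRight {t t' : List (V × Bool)} (h : SStep Γ t t') (c : List (V × Bool)) :
    SStep Γ (t ++ c) (t' ++ c) := by
  induction h with
  | swap l m h t => exact SStep.swap l m h (t ++ c)
  | cons a _ ih => exact SStep.cons a ih

lemma SEq.appendRight {t t' : List (V × Bool)} (h : SEq Γ t t') (c : List (V × Bool)) :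
    SEq Γ (t ++ c) (t' ++ c) := by
  induction h with
  | refl => exact SEq.refl _
  | tail _ hs ih => exact ih.trans (SEq.single (hs.appendRight c))

/-- Move a letter to the front over an independent prefix. -/
lemma seq_move_front {x : V × Bool} : ∀ {c : List (V × Bool)},
    (∀ m ∈ c, Ind Γ x m) → ∀ d, SEq Γ (c ++ x :: d) (x :: (c ++ d))
  | [], _, d => SEq.refl _
  | a :: c, h, d => by
      have h1 : SEq Γ (c ++ x :: d) (x :: (c ++ d)) :=
        seq_move_front (fun m hm => h m (List.mem_cons_of_mem a hm)) d
      refine (SEq.cons a h1).trans (SEq.single ?_)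
      exact SStep.swap a x ((h a (List.mem_cons_self)).symm) _

lemma SStep.eval_eq {w w' : List (V × Bool)} (h : SStep Γ w w') :
    evalWord Γ w = evalWord Γ w' := by
  induction h with
  | swap l m h t =>
      simp only [evalWord_cons, ← mul_assoc]
      rw [(letter_commute Γ h).eq]
  | cons a _ ih => simp [evalWord_cons, ih]

lemma SEq.eval_eq {w w' : List (V × Bool)} (h : SEq Γ w w') :
    evalWord Γ w = evalWord Γ w' := by
  induction h with
  | refl => rfl
  | tail _ h ih => exact ih.trans h.eval_eq

lemma SStep.length_eq {w w' : List (V × Bool)} (h : SStep Γ w w') :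
    w.length = w'.length := by
  induction h with
  | swap => simp
  | cons a _ ih => simp [ih]

lemma SEq.length_eq {w w' : List (V × Bool)} (h : SEq Γ w w') :
    w.length = w'.length := by
  induction h with
  | refl => rfl
  | tail _ h ih => exact ih.trans h.length_eq

variable (Γ)

/-- `CancelAt Γ x w w'` : `w` starts with letters independent from `x`, followed by
`x⁻¹`; `w'` is the result of deleting that `x⁻¹`. -/
inductive CancelAt (x : V × Bool) : List (V × Bool) → List (V × Bool) → Prop
  | head (t : List (V × Bool)) : CancelAt x (linv x :: t) t
  | cons {m : V × Bool} {t t' : List (V × Bool)} (h : Ind Γ x m) :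
      CancelAt x t t' → CancelAt x (m :: t) (m :: t')

/-- A word contains a cancelling pair. -/
inductive HasPair : List (V × Bool) → Prop
  | here {x : V × Bool} {t t' : List (V × Bool)} : CancelAt Γ x t t' → HasPair (x :: t)
  | there (a : V × Bool) {t : List (V × Bool)} : HasPair t → HasPair (a :: t)

variable {Γ}

lemma CancelAt.eval_eq {x : V × Bool} {t t' : List (V × Bool)} (h : CancelAt Γ x t t') :
    evalWord Γ t = (raagLetter Γ x)⁻¹ * evalWord Γ t' := by
  induction h with
  | head t => simp
  | cons hm _ ih =>
      rw [evalWord_cons, ih, evalWord_cons, ← mul_assoc, ← mul_assoc]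
      congr 1
      exact ((letter_commute Γ hm).inv_left.symm).eq

lemma CancelAt.length_eq {x : V × Bool} {t t' : List (V × Bool)} (h : CancelAt Γ x t t') :
    t.length = t'.length + 1 := by
  induction h with
  | head t => simp
  | cons _ _ ih => simp [ih]

lemma CancelAt.exists_decomp {x : V × Bool} {t t' : List (V × Bool)} (h : CancelAt Γ x t t') :
    ∃ c d, t = c ++ linv x :: d ∧ t' = c ++ d ∧ ∀ m ∈ c, Ind Γ x m := by
  induction h with
  | head t => exact ⟨[], t, rfl, rfl, by simp⟩
  | @cons m t1 t1' hm _ ih =>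
      obtain ⟨c, d, h1, h2, h3⟩ := ih
      exact ⟨m :: c, d, by simp [h1], by simp [h2], by
        intro m hm'
        rcases List.mem_cons.mp hm' with rfl | hm'
        · exact hm
        · exact h3 m hm'⟩

lemma cancelAt_of_decomp {x : V × Bool} : ∀ {c : List (V × Bool)},
    (∀ m ∈ c, Ind Γ x m) → ∀ d, CancelAt Γ x (c ++ linv x :: d) (c ++ d)
  | [], _, d => CancelAt.head d
  | a :: c, h, d => CancelAt.cons (h a (List.mem_cons_self))
      (cancelAt_of_decomp (fun m hm => h m (List.mem_cons_of_mem a hm)) d)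

end Stmt19Aux
namespace Stmt19Aux

attribute [local instance] Classical.propDecidable

variable {V : Type} {Γ : SimpleGraph V}

lemma cancelAt_sstep {x : V × Bool} {w w' s : List (V × Bool)}
    (hs : SStep Γ w w') (hc : CancelAt Γ x w s) : ∃ s', CancelAt Γ x w' s' := by
  induction hs generalizing s with
  | swap l m hlm t =>
      cases hc with
      | head =>
          -- l = linv x, s = m :: t
          exact ⟨m :: t, CancelAt.cons ((ind_linv_left Γ).mp hlm) (CancelAt.head t)⟩
      | cons hxl hc2 =>
          cases hc2 with
          | head => exact ⟨l :: t, CancelAt.head (l :: t)⟩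
          | cons hxm hc3 => exact ⟨_, CancelAt.cons hxm (CancelAt.cons hxl hc3)⟩
  | cons a hstep ih =>
      cases hc with
      | head => exact ⟨_, CancelAt.head _⟩
      | cons hxa hc2 =>
          obtain ⟨s', hs'⟩ := ih hc2
          exact ⟨_, CancelAt.cons hxa hs'⟩

lemma hasPair_sstep {w w' : List (V × Bool)} (hs : SStep Γ w w') (hp : HasPair Γ w) :
    HasPair Γ w' := by
  induction hs with
  | swap l m hlm t =>
      cases hp with
      | here hc =>
          cases hc with
          | head => exact absurd rfl (ne_linv_of_ind Γ hlm)
          | cons _ hc2 => exact HasPair.there m (HasPair.here hc2)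
      | there _ hp2 =>
          cases hp2 with
          | here hc => exact HasPair.here (CancelAt.cons (hlm.symm) hc)
          | there _ hp3 => exact HasPair.there _ (HasPair.there _ hp3)
  | cons a hstep ih =>
      cases hp with
      | here hc =>
          obtain ⟨s', hs'⟩ := cancelAt_sstep hstep hc
          exact HasPair.here hs'
      | there _ hp2 => exact HasPair.there _ (ih hp2)

lemma hasPair_seq {w w' : List (V × Bool)} (hs : SEq Γ w w') (hp : HasPair Γ w) :
    HasPair Γ w' := by
  induction hs with
  | refl => exact hp
  | tail _ h ih => exact hasPair_sstep h ih

variable (Γ)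

/-- Left multiplication by a letter on words: delete a cancelling `x⁻¹` if one is
reachable, otherwise insert `x` before the first blocking letter. -/
noncomputable def act (x : V × Bool) : List (V × Bool) → List (V × Bool)
  | [] => [x]
  | m :: t => if m = linv x then t else if Ind Γ x m then m :: act x t else x :: m :: t

variable {Γ}

@[simp] lemma act_nil (x : V × Bool) : act Γ x [] = [x] := rfl

lemma act_cons_del {x m : V × Bool} (t : List (V × Bool)) (h : m = linv x) :
    act Γ x (m :: t) = t := by simp [act, h]

lemma act_cons_ind {x m : V × Bool} (t : List (V × Bool)) (h2 : Ind Γ x m) :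
    act Γ x (m :: t) = m :: act Γ x t := by
  simp [act, ne_linv_of_ind Γ h2, h2]

lemma act_cons_block {x m : V × Bool} (t : List (V × Bool)) (h1 : m ≠ linv x)
    (h2 : ¬ Ind Γ x m) : act Γ x (m :: t) = x :: m :: t := by simp [act, h1, h2]

lemma act_del {x : V × Bool} {w w' : List (V × Bool)} (h : CancelAt Γ x w w') :
    act Γ x w = w' := by
  induction h with
  | head t => exact act_cons_del t rfl
  | cons hm _ ih => rw [act_cons_ind _ hm, ih]

lemma act_spec (x : V × Bool) (w : List (V × Bool)) :
    (∃ w', CancelAt Γ x w w' ∧ act Γ x w = w') ∨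
    ((¬ ∃ w', CancelAt Γ x w w') ∧ ∃ c d, w = c ++ d ∧ act Γ x w = c ++ x :: d ∧
      ∀ m ∈ c, Ind Γ x m) := by
  induction w with
  | nil =>
      right
      refine ⟨?_, [], [], rfl, rfl, by simp⟩
      rintro ⟨w', hw'⟩; cases hw'
  | cons m t ih =>
      by_cases h1 : m = linv x
      · exact Or.inl ⟨t, h1 ▸ CancelAt.head t, act_cons_del t h1⟩
      by_cases h2 : Ind Γ x m
      · rcases ih with ⟨t', hc, he⟩ | ⟨hnc, c, d, hcd, hact, hind⟩
        · exact Or.inl ⟨m :: t', CancelAt.cons h2 hc, by rw [act_cons_ind _ h2, he]⟩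
        · right
          refine ⟨?_, m :: c, d, by simp [hcd], by rw [act_cons_ind _ h2, hact]; rfl, ?_⟩
          · rintro ⟨w', hw'⟩
            cases hw' with
            | head => exact h1 rfl
            | cons _ hc2 => exact hnc ⟨_, hc2⟩
          · intro m' hm'
            rcases List.mem_cons.mp hm' with rfl | hm'
            · exact h2
            · exact hind m' hm'
      · right
        refine ⟨?_, [], m :: t, rfl, act_cons_block t h1 h2, by simp⟩
        rintro ⟨w', hw'⟩
        cases hw' with
        | head => exact h1 rfl
        | cons hxm _ => exact h2 hxm

/-- If no cancellation is available, `act` inserts and the result shuffles to `x :: w`. -/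
lemma act_insert_seq {x : V × Bool} {w : List (V × Bool)}
    (h : ¬ ∃ w', CancelAt Γ x w w') : SEq Γ (act Γ x w) (x :: w) := by
  rcases act_spec x w with ⟨w', hc, _⟩ | ⟨_, c, d, hcd, hact, hind⟩
  · exact absurd ⟨w', hc⟩ h
  · rw [hact, hcd]
    exact seq_move_front hind d

lemma act_noPair {x : V × Bool} {w : List (V × Bool)} (h : ¬ HasPair Γ w) :
    ¬ HasPair Γ (act Γ x w) := by
  rcases act_spec x w with ⟨w', hc, he⟩ | ⟨hnc, c, d, hcd, hact, hind⟩
  · obtain ⟨c, d, hw, hw', hind⟩ := hc.exists_decomp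
    rw [he, hw']
    intro hp
    apply h
    rw [hw]
    have hmv : SEq Γ (c ++ linv x :: d) (linv x :: (c ++ d)) :=
      seq_move_front (x := linv x) (fun m hm => hind m hm) d
    exact hasPair_seq hmv.symm (HasPair.there _ hp)
  · rw [hact]
    intro hp
    have hp2 : HasPair Γ (x :: (c ++ d)) :=
      hasPair_seq (seq_move_front hind d) hp
    rw [← hcd] at hp2
    cases hp2 with
    | here hc => exact hnc ⟨_, hc⟩
    | there _ hp3 => exact h hp3

lemma eval_act (x : V × Bool) (w : List (V × Bool)) :
    evalWord Γ (act Γ x w) = raagLetter Γ x * evalWord Γ w := by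
  rcases act_spec x w with ⟨w', hc, he⟩ | ⟨_, c, d, hcd, hact, hind⟩
  · rw [he, hc.eval_eq]
    rw [← mul_assoc, mul_inv_cancel, one_mul]
  · rw [hact, hcd]
    exact ((seq_move_front hind d).eval_eq).trans (by simp)

lemma length_act_le (x : V × Bool) (w : List (V × Bool)) :
    (act Γ x w).length ≤ w.length + 1 := by
  rcases act_spec x w with ⟨w', hc, he⟩ | ⟨_, c, d, hcd, hact, hind⟩
  · rw [he]; have := hc.length_eq; omega
  · rw [hact, hcd]; simp [List.length_append]; omega

end Stmt19Aux
namespace Stmt19Aux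

attribute [local instance] Classical.propDecidable

variable {V : Type} {Γ : SimpleGraph V}

lemma act_sstep (x : V × Bool) {w w' : List (V × Bool)} (hs : SStep Γ w w') :
    SEq Γ (act Γ x w) (act Γ x w') := by
  induction hs with
  | swap l m hlm t =>
      by_cases hl : l = linv x
      · subst hl
        have hxm : Ind Γ x m := (ind_linv_left Γ).mp hlm
        rw [act_cons_del _ rfl, act_cons_ind _ hxm, act_cons_del _ rfl]
        exact SEq.refl _
      · by_cases hm : m = linv x
        · subst hm
          have hxl : Ind Γ x l := ((ind_linv_right Γ).mp hlm).symm
          rw [act_cons_ind _ hxl, act_cons_del _ rfl, act_cons_del _ rfl]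
          exact SEq.refl _
        · by_cases hxl : Ind Γ x l <;> by_cases hxm : Ind Γ x m
          · rw [act_cons_ind (m :: t) hxl, act_cons_ind t hxm, act_cons_ind (l :: t) hxm,
              act_cons_ind t hxl]
            exact SEq.single (SStep.swap l m hlm _)
          · rw [act_cons_ind (m :: t) hxl, act_cons_block t hm hxm,
              act_cons_block (l :: t) hm hxm]
            exact (SEq.single (SStep.swap l x hxl.symm _)).trans
              (SEq.cons x (SEq.single (SStep.swap l m hlm _)))
          · rw [act_cons_block (m :: t) hl hxl, act_cons_ind (l :: t) hxm,
              act_cons_block t hl hxl]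
            exact (SEq.cons x (SEq.single (SStep.swap l m hlm _))).trans
              (SEq.single (SStep.swap x m hxm _))
          · rw [act_cons_block (m :: t) hl hxl, act_cons_block (l :: t) hm hxm]
            exact SEq.cons x (SEq.single (SStep.swap l m hlm _))
  | cons a hstep ih =>
      by_cases ha : a = linv x
      · rw [act_cons_del _ ha, act_cons_del _ ha]
        exact SEq.single hstep
      · by_cases hxa : Ind Γ x a
        · rw [act_cons_ind _ hxa, act_cons_ind _ hxa]
          exact SEq.cons a ih
        · rw [act_cons_block _ ha hxa, act_cons_block _ ha hxa]
          exact SEq.cons x (SEq.cons a (SEq.single hstep))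

lemma act_seq (x : V × Bool) {w w' : List (V × Bool)} (hs : SEq Γ w w') :
    SEq Γ (act Γ x w) (act Γ x w') := by
  induction hs with
  | refl => exact SEq.refl _
  | tail _ h ih => exact ih.trans (act_sstep x h)

lemma act_act_inv (x : V × Bool) : ∀ w : List (V × Bool), ¬ HasPair Γ w →
    SEq Γ (act Γ x (act Γ (linv x) w)) w := by
  intro w
  induction w with
  | nil =>
      intro _
      rw [act_nil, act_cons_del (x := x) [] rfl]
      exact SEq.refl _
  | cons m t ih =>
      intro hnp
      by_cases hmx : m = x
      · rw [hmx] at hnp ⊢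
        rw [act_cons_del (x := linv x) t (by rw [linv_linv])]
        refine act_insert_seq ?_
        rintro ⟨w', hw'⟩
        exact hnp (HasPair.here hw')
      · by_cases hm2 : m = linv x
        · subst hm2
          rw [act_cons_block (x := linv x) t (by simpa using linv_ne x)
              (fun h => h.1 rfl),
            act_cons_del (linv x :: t) rfl]
          exact SEq.refl _
        · by_cases hxm : Ind Γ x m
          · rw [act_cons_ind (x := linv x) t hxm, act_cons_ind (act Γ (linv x) t) hxm]
            exact SEq.cons m (ih (fun hp => hnp (HasPair.there m hp)))
          · rw [act_cons_block (x := linv x) t (by simpa using hmx)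
              (fun h => hxm ((ind_linv_left Γ).mp h)),
              act_cons_del (m :: t) rfl]
            exact SEq.refl _

lemma act_comm {x y : V × Bool} (hxy : Ind Γ x y) : ∀ w : List (V × Bool),
    SEq Γ (act Γ x (act Γ y w)) (act Γ y (act Γ x w)) := by
  have hyx : Ind Γ y x := hxy.symm
  intro w
  induction w with
  | nil =>
      rw [act_nil, act_nil, act_cons_ind [] hxy, act_cons_ind [] hyx, act_nil, act_nil]
      exact SEq.single (SStep.swap y x hyx [])
  | cons m t ih =>
      by_cases hmy : m = linv y
      · subst hmy
        rw [act_cons_del (x := y) t rfl, act_cons_ind t ((ind_linv_right Γ).mpr hxy),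
          act_cons_del (x := y) (act Γ x t) rfl]
        exact SEq.refl _
      · by_cases hmx : m = linv x
        · subst hmx
          rw [act_cons_del (x := x) t rfl, act_cons_ind t ((ind_linv_right Γ).mpr hyx),
            act_cons_del (x := x) (act Γ y t) rfl]
          exact SEq.refl _
        · by_cases hym : Ind Γ y m <;> by_cases hxm : Ind Γ x m
          · rw [act_cons_ind t hym, act_cons_ind (act Γ y t) hxm, act_cons_ind t hxm,
              act_cons_ind (act Γ x t) hym]
            exact SEq.cons m ih
          · rw [act_cons_ind t hym, act_cons_block (act Γ y t) hmx hxm,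
              act_cons_block t hmx hxm, act_cons_ind (m :: t) hyx, act_cons_ind t hym]
            exact SEq.refl _
          · rw [act_cons_block t hmy hym, act_cons_ind (m :: t) hxy, act_cons_ind t hxm,
              act_cons_block (act Γ x t) hmy hym]
            exact SEq.refl _
          · rw [act_cons_block t hmy hym, act_cons_ind (m :: t) hxy,
              act_cons_block t hmx hxm,
              act_cons_ind (m :: t) hyx, act_cons_block t hmy hym]
            exact SEq.single (SStep.swap y x hyx _)

end Stmt19Aux
namespace Stmt19Aux

attribute [local instance] Classical.propDecidable

variable {V : Type} (Γ : SimpleGraph V)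

/-- Reduced words (no cancelling pair). -/
def NRWord := {w : List (V × Bool) // ¬ HasPair Γ w}

instance nrSetoid : Setoid (NRWord Γ) where
  r w w' := SEq Γ w.1 w'.1
  iseqv := ⟨fun w => SEq.refl _, SEq.symm, SEq.trans⟩

/-- Reduced words modulo shuffles. -/
def NF := Quotient (nrSetoid Γ)

lemma nrword_seq_iff {w w' : NRWord Γ} :
    (⟦w⟧ : NF Γ) = ⟦w'⟧ ↔ SEq Γ w.1 w'.1 := by
  constructor
  · exact Quotient.exact
  · exact fun h => Quotient.sound h

noncomputable def actNF (x : V × Bool) : NF Γ → NF Γ :=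
  Quotient.map (fun w => ⟨act Γ x w.1, act_noPair w.2⟩) (fun _ _ h => act_seq x h)

variable {Γ}

@[simp] lemma actNF_mk (x : V × Bool) (w : NRWord Γ) :
    actNF Γ x ⟦w⟧ = ⟦⟨act Γ x w.1, act_noPair w.2⟩⟧ := rfl

lemma actNF_linv (x : V × Bool) (s : NF Γ) : actNF Γ x (actNF Γ (linv x) s) = s := by
  induction s using Quotient.inductionOn with
  | h w =>
      simp only [actNF_mk]
      exact Quotient.sound (act_act_inv x w.1 w.2)

lemma actNF_comm {x y : V × Bool} (h : Ind Γ x y) (s : NF Γ) :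
    actNF Γ x (actNF Γ y s) = actNF Γ y (actNF Γ x s) := by
  induction s using Quotient.inductionOn with
  | h w =>
      simp only [actNF_mk]
      exact Quotient.sound (act_comm h w.1)

variable (Γ)

noncomputable def actPerm (v : V) : Equiv.Perm (NF Γ) where
  toFun := actNF Γ (v, true)
  invFun := actNF Γ (v, false)
  left_inv s := actNF_linv (v, false) s
  right_inv s := actNF_linv (v, true) s

lemma raag_rel_holds : ∀ r ∈ raagRels Γ, FreeGroup.lift (actPerm Γ) r = 1 := by
  rintro r ⟨v, w, hne, hnadj, rfl⟩
  simp only [map_mul, map_inv, FreeGroup.lift_apply_of]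
  rw [mul_inv_eq_one]
  have hcomm : ∀ s : NF Γ, (actPerm Γ v * actPerm Γ w) s = (actPerm Γ w * actPerm Γ v) s := by
    intro s
    simp only [Equiv.Perm.mul_apply]
    exact actNF_comm (Γ := Γ) ⟨hne, hnadj⟩ s
  have : actPerm Γ v * actPerm Γ w = actPerm Γ w * actPerm Γ v := Equiv.ext hcomm
  rw [this]
  group

noncomputable def phi : RAAG Γ →* Equiv.Perm (NF Γ) :=
  PresentedGroup.toGroup (raag_rel_holds Γ)

lemma phi_letter (l : V × Bool) (s : NF Γ) :
    phi Γ (raagLetter Γ l) s = actNF Γ l s := by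
  cases l with
  | mk v b =>
      cases b
      · have h1 : raagLetter Γ (v, false) = (raagGen Γ v)⁻¹ := rfl
        rw [h1, map_inv]
        have h2 : phi Γ (raagGen Γ v) = actPerm Γ v := PresentedGroup.toGroup.of _
        rw [h2]
        rfl
      · have h1 : raagLetter Γ (v, true) = raagGen Γ v := rfl
        rw [h1]
        have h2 : phi Γ (raagGen Γ v) = actPerm Γ v := PresentedGroup.toGroup.of _
        rw [h2]
        rfl

def nfBase : NF Γ := ⟦⟨[], fun hp => by cases hp⟩⟧

noncomputable def nfOf (g : RAAG Γ) : NF Γ := phi Γ g (nfBase Γ)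

lemma nfOf_eval_cons (x : V × Bool) (t : List (V × Bool)) :
    nfOf Γ (evalWord Γ (x :: t)) = actNF Γ x (nfOf Γ (evalWord Γ t)) := by
  unfold nfOf
  rw [evalWord_cons, map_mul, Equiv.Perm.mul_apply, phi_letter]

lemma nfOf_eval_noPair : ∀ (w : List (V × Bool)) (hw : ¬ HasPair Γ w),
    nfOf Γ (evalWord Γ w) = ⟦⟨w, hw⟩⟧ := by
  intro w
  induction w with
  | nil =>
      intro hw
      unfold nfOf
      rw [evalWord_nil, map_one]
      rfl
  | cons x t ih =>
      intro hw
      rw [nfOf_eval_cons, ih (fun hp => hw (HasPair.there x hp))]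
      refine Eq.trans (actNF_mk x ⟨t, fun hp => hw (HasPair.there x hp)⟩) ?_
      refine Quotient.sound ?_
      refine act_insert_seq ?_
      rintro ⟨w', hw'⟩
      exact hw (HasPair.here hw')

noncomputable def lenNF : NF Γ → ℕ :=
  Quotient.lift (fun w : NRWord Γ => w.1.length) (fun _ _ h => SEq.length_eq h)

lemma lenNF_actNF (x : V × Bool) (s : NF Γ) :
    lenNF Γ (actNF Γ x s) ≤ lenNF Γ s + 1 := by
  induction s using Quotient.inductionOn with
  | h w => exact length_act_le x w.1

lemma lenNF_nfOf_le (w : List (V × Bool)) :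
    lenNF Γ (nfOf Γ (evalWord Γ w)) ≤ w.length := by
  induction w with
  | nil =>
      unfold nfOf
      rw [evalWord_nil, map_one]
      exact Nat.le_refl _
  | cons x t ih =>
      rw [nfOf_eval_cons]
      calc lenNF Γ (actNF Γ x (nfOf Γ (evalWord Γ t))) ≤ lenNF Γ (nfOf Γ (evalWord Γ t)) + 1 :=
            lenNF_actNF Γ x _
        _ ≤ t.length + 1 := Nat.add_le_add_right ih 1
        _ = (x :: t).length := by simp

/-- MAIN combinatorial theorem: a word without cancelling pair has minimal length
among all words representing the same element. -/
theorem noPair_min {w : List (V × Bool)} (hw : ¬ HasPair Γ w) {w' : List (V × Bool)}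
    (he : evalWord Γ w' = evalWord Γ w) : w.length ≤ w'.length := by
  have h1 : nfOf Γ (evalWord Γ w') = ⟦⟨w, hw⟩⟧ := by rw [he, nfOf_eval_noPair Γ w hw]
  have h2 : lenNF Γ (nfOf Γ (evalWord Γ w')) = w.length := by rw [h1]; rfl
  calc w.length = lenNF Γ (nfOf Γ (evalWord Γ w')) := h2.symm
    _ ≤ w'.length := lenNF_nfOf_le Γ w'

end Stmt19Aux
namespace Stmt19Aux

attribute [local instance] Classical.propDecidable

variable {V : Type} {Γ : SimpleGraph V}

/-- The formal inverse of a word. -/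
def invWord (w : List (V × Bool)) : List (V × Bool) := (w.map linv).reverse

@[simp] lemma invWord_length (w : List (V × Bool)) : (invWord w).length = w.length := by
  simp [invWord]

lemma invWord_cons (x : V × Bool) (t : List (V × Bool)) :
    invWord (x :: t) = invWord t ++ [linv x] := by simp [invWord]

lemma eval_invWord (w : List (V × Bool)) :
    evalWord Γ (invWord w) = (evalWord Γ w)⁻¹ := by
  induction w with
  | nil => simp [invWord]
  | cons x t ih => rw [invWord_cons, evalWord_append, ih, evalWord_cons]; simp [mul_comm]

lemma exists_word (g : RAAG Γ) : ∃ w : List (V × Bool), evalWord Γ w = g := by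
  refine PresentedGroup.induction_on (C := fun g => ∃ w, evalWord Γ w = g) g ?_
  intro z
  · induction z using FreeGroup.induction_on with
      | C1 => exact ⟨[], by simp⟩
      | of v => exact ⟨[(v, true)], by simp [raagLetter, raagGen, PresentedGroup.of]⟩
      | inv_of v _ =>
          exact ⟨[(v, false)], by
            simp only [evalWord_cons, evalWord_nil, mul_one, raagLetter]
            rw [map_inv]
            rfl⟩
      | mul z₁ z₂ ih₁ ih₂ =>
          obtain ⟨w₁, hw₁⟩ := ih₁
          obtain ⟨w₂, hw₂⟩ := ih₂
          exact ⟨w₁ ++ w₂, by rw [evalWord_append, hw₁, hw₂]; rfl⟩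

lemma wlen_set_nonempty (g : RAAG Γ) :
    {n | ∃ w : List (V × Bool), evalWord Γ w = g ∧ w.length = n}.Nonempty := by
  obtain ⟨w, hw⟩ := exists_word g
  exact ⟨w.length, w, hw, rfl⟩

lemma wlen_le_length {g : RAAG Γ} {w : List (V × Bool)} (h : evalWord Γ w = g) :
    wlen Γ g ≤ w.length := Nat.sInf_le ⟨w, h, rfl⟩

lemma exists_geodesic (g : RAAG Γ) :
    ∃ w : List (V × Bool), evalWord Γ w = g ∧ w.length = wlen Γ g := by
  have := Nat.sInf_mem (wlen_set_nonempty (Γ := Γ) g)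
  obtain ⟨w, hw, hl⟩ := this
  exact ⟨w, hw, hl⟩

@[simp] lemma wlen_one : wlen Γ (1 : RAAG Γ) = 0 :=
  Nat.le_zero.mp (wlen_le_length (w := []) (by simp))

lemma eq_one_of_wlen_zero {g : RAAG Γ} (h : wlen Γ g = 0) : g = 1 := by
  obtain ⟨w, hw, hl⟩ := exists_geodesic g
  rw [h, List.length_eq_zero_iff] at hl
  rw [← hw, hl]
  simp

lemma wlen_mul_le (g h : RAAG Γ) : wlen Γ (g * h) ≤ wlen Γ g + wlen Γ h := by
  obtain ⟨w₁, h₁, l₁⟩ := exists_geodesic g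
  obtain ⟨w₂, h₂, l₂⟩ := exists_geodesic h
  calc wlen Γ (g * h) ≤ (w₁ ++ w₂).length :=
        wlen_le_length (by rw [evalWord_append, h₁, h₂])
    _ = wlen Γ g + wlen Γ h := by simp [l₁, l₂]

lemma wlen_inv (g : RAAG Γ) : wlen Γ g⁻¹ = wlen Γ g := by
  have key : ∀ h : RAAG Γ, wlen Γ h⁻¹ ≤ wlen Γ h := by
    intro h
    obtain ⟨w, hw, hl⟩ := exists_geodesic h
    calc wlen Γ h⁻¹ ≤ (invWord w).length :=
          wlen_le_length (by rw [eval_invWord, hw])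
      _ = wlen Γ h := by simp [hl]
  exact le_antisymm (key g) (by simpa using key g⁻¹)

lemma wlen_pow_le (g : RAAG Γ) (k : ℕ) : wlen Γ (g ^ k) ≤ k * wlen Γ g := by
  induction k with
  | zero => simp
  | succ k ih =>
      calc wlen Γ (g ^ (k + 1)) = wlen Γ (g ^ k * g) := by rw [pow_succ]
        _ ≤ wlen Γ (g ^ k) + wlen Γ g := wlen_mul_le _ _
        _ ≤ k * wlen Γ g + wlen Γ g := Nat.add_le_add_right ih _
        _ = (k + 1) * wlen Γ g := by ring

/-- The mod-2 length homomorphism. -/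
noncomputable def psi (Γ : SimpleGraph V) : RAAG Γ →* Multiplicative (ZMod 2) :=
  PresentedGroup.toGroup (f := fun _ => Multiplicative.ofAdd (1 : ZMod 2))
    (by rintro r ⟨v, w, _, _, rfl⟩; simp only [map_mul, map_inv, FreeGroup.lift_apply_of]; group)

lemma psi_eval (w : List (V × Bool)) :
    psi Γ (evalWord Γ w) = Multiplicative.ofAdd (w.length : ZMod 2) := by
  induction w with
  | nil => simp
  | cons x t ih =>
      rw [evalWord_cons, map_mul, ih]
      have hx : psi Γ (raagLetter Γ x) = Multiplicative.ofAdd (1 : ZMod 2) := by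
        cases x with
        | mk v b =>
            cases b
            · show psi Γ ((raagGen Γ v)⁻¹) = _
              rw [map_inv]
              rw [show psi Γ (raagGen Γ v) = Multiplicative.ofAdd (1 : ZMod 2) from
                PresentedGroup.toGroup.of _]
              rw [← ofAdd_neg]
              norm_num
              rfl
            · exact PresentedGroup.toGroup.of _
      rw [hx, ← ofAdd_add]
      congr 1
      push_cast [List.length_cons]
      ring

lemma psi_wlen (g : RAAG Γ) :
    psi Γ g = Multiplicative.ofAdd ((wlen Γ g : ZMod 2)) := by
  obtain ⟨w, hw, hl⟩ := exists_geodesic g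
  rw [← hw, psi_eval, hw, hl]

lemma wlen_parity_conj (u g : RAAG Γ) :
    (wlen Γ (u⁻¹ * g * u) : ZMod 2) = (wlen Γ g : ZMod 2) := by
  have h1 : psi Γ (u⁻¹ * g * u) = psi Γ g := by
    simp only [map_mul, map_inv]
    rw [mul_comm ((psi Γ u)⁻¹ * psi Γ g) (psi Γ u), ← mul_assoc]
    simp [mul_assoc]
  rw [psi_wlen, psi_wlen] at h1
  exact Multiplicative.ofAdd.injective h1

lemma parity_mod (m k : ℕ) (h : (m : ZMod 2) = (k : ZMod 2)) : m % 2 = k % 2 := by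
  have := (ZMod.natCast_eq_natCast_iff m k 2).mp h
  exact this

end Stmt19Aux
namespace Stmt19Aux

attribute [local instance] Classical.propDecidable

variable {V : Type} {Γ : SimpleGraph V}

lemma hasPair_shorter {w : List (V × Bool)} (hp : HasPair Γ w) :
    ∃ w', evalWord Γ w' = evalWord Γ w ∧ w'.length + 2 = w.length := by
  induction hp with
  | here hc =>
      rename_i x t t'
      refine ⟨t', ?_, by have := hc.length_eq; simp [this]⟩
      rw [evalWord_cons, hc.eval_eq, ← mul_assoc, mul_inv_cancel, one_mul]
  | there a _ ih =>
      obtain ⟨w', he, hl⟩ := ih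
      exact ⟨a :: w', by simp [he], by simp [← hl]⟩

lemma noPair_geo {w : List (V × Bool)} (hl : w.length = wlen Γ (evalWord Γ w)) :
    ¬ HasPair Γ w := by
  intro hp
  obtain ⟨w', he, hlen⟩ := hasPair_shorter hp
  have := wlen_le_length (g := evalWord Γ w) he
  omega

lemma hasPair_of_short {w : List (V × Bool)} (h : wlen Γ (evalWord Γ w) < w.length) :
    HasPair Γ w := by
  by_contra hnp
  obtain ⟨w', he, hl⟩ := exists_geodesic (evalWord Γ w)
  have := noPair_min Γ hnp he
  omega

lemma hasPair_decomp {w : List (V × Bool)} (hp : HasPair Γ w) :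
    ∃ α x β γ, w = α ++ x :: (β ++ linv x :: γ) ∧ ∀ m ∈ β, Ind Γ x m := by
  induction hp with
  | here hc =>
      rename_i x t t'
      obtain ⟨c, d, h1, _, h3⟩ := hc.exists_decomp
      exact ⟨[], x, c, d, by simp [h1], h3⟩
  | there a _ ih =>
      obtain ⟨α, x, β, γ, h1, h2⟩ := ih
      exact ⟨a :: α, x, β, γ, by simp [h1], h2⟩

lemma hasPair_of_decomp {x : V × Bool} {β : List (V × Bool)}
    (hβ : ∀ m ∈ β, Ind Γ x m) (α γ : List (V × Bool)) :
    HasPair Γ (α ++ x :: (β ++ linv x :: γ)) := by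
  induction α with
  | nil => exact HasPair.here (cancelAt_of_decomp hβ γ)
  | cons a α ih => exact HasPair.there a ih

lemma not_hasPair_singleton (x : V × Bool) : ¬ HasPair Γ [x] := by
  intro hp
  cases hp with
  | here hc => cases hc
  | there _ hp2 => cases hp2

lemma word_commute {y : V × Bool} {c : List (V × Bool)} (h : ∀ m ∈ c, Ind Γ y m) :
    Commute (raagLetter Γ y) (evalWord Γ c) := by
  induction c with
  | nil => simp [Commute.one_right]
  | cons m t ih =>
      rw [evalWord_cons]
      exact Commute.mul_right (letter_commute Γ (h m (List.mem_cons_self)))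
        (ih (fun m' hm' => h m' (List.mem_cons_of_mem m hm')))

lemma eval_singleton (x : V × Bool) : evalWord Γ [x] = raagLetter Γ x := by simp

lemma psi_letter (x : V × Bool) :
    psi Γ (raagLetter Γ x) = Multiplicative.ofAdd (1 : ZMod 2) := by
  have := psi_eval (Γ := Γ) [x]
  rw [eval_singleton] at this
  simpa using this

lemma wlen_letter (x : V × Bool) : wlen Γ (raagLetter Γ x) = 1 := by
  have hle : wlen Γ (raagLetter Γ x) ≤ 1 := by
    simpa using wlen_le_length (eval_singleton (Γ := Γ) x)
  rcases Nat.le_one_iff_eq_zero_or_eq_one.mp hle with h0 | h1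
  · exfalso
    have h2 := eq_one_of_wlen_zero h0
    have h3 := psi_letter (Γ := Γ) x
    rw [h2, map_one] at h3
    have h4 : (1 : Multiplicative (ZMod 2)) ≠ Multiplicative.ofAdd (1 : ZMod 2) := by decide
    exact h4 h3
  · exact h1

lemma pair_split {y : V × Bool} {A B α β γ : List (V × Bool)}
    (h : A ++ B = α ++ y :: (β ++ linv y :: γ)) (hβ : ∀ m ∈ β, Ind Γ y m) :
    HasPair Γ A ∨ HasPair Γ B ∨
    ∃ α' βA βB γ', A = α' ++ y :: βA ∧ B = βB ++ linv y :: γ' ∧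
      (∀ m ∈ βA, Ind Γ y m) ∧ (∀ m ∈ βB, Ind Γ y m) := by
  rcases List.append_eq_append_iff.mp h with ⟨a', _, ha2⟩ | ⟨c', hc1, hc2⟩
  · right; left
    rw [ha2]
    exact hasPair_of_decomp hβ a' γ
  · cases c' with
    | nil =>
        right; left
        rw [show B = y :: (β ++ linv y :: γ) from by simpa using hc2.symm]
        exact hasPair_of_decomp hβ [] γ
    | cons z c'' =>
        rw [List.cons_append] at hc2
        injection hc2 with hz hc3
        subst hz
        rcases List.append_eq_append_iff.mp hc3 with ⟨d', hd1, hd2⟩ | ⟨e', he1, he2⟩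
        · cases d' with
          | nil =>
              right; right
              refine ⟨α, β, [], γ, ?_, ?_, hβ, by simp⟩
              · rw [hc1, hd1]
                simp
              · simpa using hd2.symm
          | cons z' d'' =>
              left
              injection hd2 with hz' hd3
              subst hz'
              rw [hc1, hd1]
              exact hasPair_of_decomp hβ α d''
        · right; right
          refine ⟨α, c'', e', γ, by rw [hc1], he2, ?_, ?_⟩
          · intro m hm
            exact hβ m (he1 ▸ List.mem_append_left _ hm)
          · intro m hm
            exact hβ m (he1 ▸ List.mem_append_right _ hm)

/-- The key cancellation lemma: in a non-geodesic product, a letter from `a`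
cancels with a letter from `b`. -/
lemma cancel_mid {a b : RAAG Γ} (h : wlen Γ (a * b) < wlen Γ a + wlen Γ b) :
    ∃ (x : V × Bool) (a' b' : RAAG Γ), a = a' * raagLetter Γ x ∧
      b = (raagLetter Γ x)⁻¹ * b' ∧
      wlen Γ a' + 1 = wlen Γ a ∧ wlen Γ b' + 1 = wlen Γ b := by
  obtain ⟨wa, ha, la⟩ := exists_geodesic a
  obtain ⟨wb, hb, lb⟩ := exists_geodesic b
  have hW : evalWord Γ (wa ++ wb) = a * b := by rw [evalWord_append, ha, hb]
  have hp : HasPair Γ (wa ++ wb) := by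
    apply hasPair_of_short
    rw [hW]
    simp only [List.length_append]
    omega
  obtain ⟨α, y, β, γ, hdec, hβ⟩ := hasPair_decomp hp
  rcases pair_split hdec hβ with hA | hB | ⟨α', βA, βB, γ', hA, hB, hβA, hβB⟩
  · exact absurd hA (noPair_geo (by rw [ha, la]))
  · exact absurd hB (noPair_geo (by rw [hb, lb]))
  · refine ⟨y, evalWord Γ (α' ++ βA), evalWord Γ (βB ++ γ'), ?_, ?_, ?_, ?_⟩
    · rw [← ha, hA]
      simp only [evalWord_append, evalWord_cons]
      rw [mul_assoc, (word_commute hβA).eq, ← mul_assoc]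
    · rw [← hb, hB]
      simp only [evalWord_append, evalWord_cons, raagLetter_linv]
      rw [← mul_assoc, ← (word_commute (c := βB) (fun m hm => hβB m hm)).inv_left.eq, mul_assoc]
    · have h1 : wlen Γ (evalWord Γ (α' ++ βA)) ≤ α'.length + βA.length := by
        simpa using wlen_le_length (g := evalWord Γ (α' ++ βA)) rfl
      have h2 : wa.length = α'.length + βA.length + 1 := by simp [hA]; omega
      have h3 : wlen Γ a ≤ wlen Γ (evalWord Γ (α' ++ βA)) + 1 := by
        calc wlen Γ a = wlen Γ (evalWord Γ (α' ++ βA) * raagLetter Γ y) := by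
              congr 1
              rw [← ha, hA]
              simp only [evalWord_append, evalWord_cons]
              rw [mul_assoc, (word_commute hβA).eq, ← mul_assoc]
          _ ≤ _ := by
              have := wlen_mul_le (Γ := Γ) (evalWord Γ (α' ++ βA)) (raagLetter Γ y)
              rw [wlen_letter] at this
              exact this
      omega
    · have h1 : wlen Γ (evalWord Γ (βB ++ γ')) ≤ βB.length + γ'.length := by
        simpa using wlen_le_length (g := evalWord Γ (βB ++ γ')) rfl
      have h2 : wb.length = βB.length + γ'.length + 1 := by simp [hB]; omega
      have h3 : wlen Γ b ≤ wlen Γ (evalWord Γ (βB ++ γ')) + 1 := by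
        calc wlen Γ b = wlen Γ ((raagLetter Γ y)⁻¹ * evalWord Γ (βB ++ γ')) := by
              congr 1
              rw [← hb, hB]
              simp only [evalWord_append, evalWord_cons, raagLetter_linv]
              rw [← mul_assoc, ← (word_commute (c := βB) (fun m hm => hβB m hm)).inv_left.eq, mul_assoc]
          _ ≤ _ := by
              have := wlen_mul_le (Γ := Γ) ((raagLetter Γ y)⁻¹) (evalWord Γ (βB ++ γ'))
              rw [wlen_inv, wlen_letter] at this
              omega
      omega

end Stmt19Aux
namespace Stmt19Aux

attribute [local instance] Classical.propDecidable

variable {V : Type} {Γ : SimpleGraph V}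

lemma both_ends {ξ : V × Bool} {g : RAAG Γ}
    (h1 : wlen Γ ((raagLetter Γ ξ)⁻¹ * g) ≤ wlen Γ g)
    (h2 : wlen Γ (g * raagLetter Γ ξ) ≤ wlen Γ g) :
    wlen Γ ((raagLetter Γ ξ)⁻¹ * g * raagLetter Γ ξ) + 2 ≤ wlen Γ g := by
  obtain ⟨w, hw, hl⟩ := exists_geodesic g
  have hwg : ¬ HasPair Γ w := noPair_geo (by rw [hw, ← hl])
  have hp1 : HasPair Γ (linv ξ :: w) := by
    apply hasPair_of_short
    rw [evalWord_cons, raagLetter_linv, hw]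
    simp only [List.length_cons]
    omega
  have hfront : ∃ c d, w = c ++ ξ :: d ∧ ∀ m ∈ c, Ind Γ ξ m := by
    cases hp1 with
    | here hc =>
        obtain ⟨c, d, hcd, _, hind⟩ := hc.exists_decomp
        rw [linv_linv] at hcd
        exact ⟨c, d, hcd, fun m hm => hind m hm⟩
    | there _ hp => exact absurd hp hwg
  have hp2 : HasPair Γ (w ++ [ξ]) := by
    apply hasPair_of_short
    rw [evalWord_append, eval_singleton, hw]
    simp only [List.length_append, List.length_singleton]
    omega
  have hback : ∃ e f, w = e ++ linv ξ :: f ∧ ∀ m ∈ f, Ind Γ ξ m := by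
    obtain ⟨α, y, β, γ, hdec, hβ⟩ := hasPair_decomp hp2
    rcases pair_split hdec hβ with hA | hB | ⟨α', βA, βB, γ', hA, hB, hβA, hβB⟩
    · exact absurd hA hwg
    · exact absurd hB (not_hasPair_singleton (Γ := Γ) ξ)
    · cases βB with
      | nil =>
          rw [List.nil_append] at hB
          rw [List.cons.injEq] at hB
          have hyy : y = linv ξ := by rw [hB.1, linv_linv]
          subst hyy
          exact ⟨α', βA, by rw [hA], fun m hm => hβA m hm⟩
      | cons bb βB' =>
          exfalso
          rw [List.cons_append, List.cons.injEq] at hB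
          simpa using hB.2
  obtain ⟨c, d, hcd, hcind⟩ := hfront
  obtain ⟨e, f, hef, hfind⟩ := hback
  have hkey : ∃ mid, w = c ++ ξ :: (mid ++ linv ξ :: f) := by
    have heq : c ++ ξ :: d = e ++ linv ξ :: f := by rw [← hcd, ← hef]
    rcases List.append_eq_append_iff.mp heq with ⟨a', ha1, ha2⟩ | ⟨c', hc1, hc2⟩
    · cases a' with
      | nil =>
          exfalso
          rw [List.nil_append, List.cons.injEq] at ha2
          exact (linv_ne ξ) ha2.1.symm
      | cons z a'' =>
          rw [List.cons_append, List.cons.injEq] at ha2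
          exact ⟨a'', by rw [hcd, ha2.2]⟩
    · exfalso
      cases c' with
      | nil =>
          rw [List.nil_append] at hc2
          rw [List.cons.injEq] at hc2
          exact (linv_ne ξ) hc2.1
      | cons z c'' =>
          rw [List.cons_append, List.cons.injEq] at hc2
          have hmem : linv ξ ∈ c := by
            rw [hc1, ← hc2.1]
            exact List.mem_append_right _ List.mem_cons_self
          exact (hcind (linv ξ) hmem).1 rfl
  obtain ⟨mid, hmid⟩ := hkey
  set x := raagLetter Γ ξ with hx
  set A := evalWord Γ c with hA'
  set Bm := evalWord Γ mid with hB'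
  set C := evalWord Γ f with hC'
  have hAx : Commute x A := word_commute hcind
  have hCx : Commute x C := word_commute hfind
  have e1 : g = A * x * Bm * x⁻¹ * C := by
    rw [← hw, hmid]
    simp only [evalWord_append, evalWord_cons, raagLetter_linv, ← hx, ← hA', ← hB', ← hC']
    simp [mul_assoc]
  have e2 : x⁻¹ * g * x = A * Bm * C := by
    rw [e1]
    calc x⁻¹ * (A * x * Bm * x⁻¹ * C) * x
        = (x⁻¹ * A) * x * Bm * x⁻¹ * (C * x) := by group
      _ = (A * x⁻¹) * x * Bm * x⁻¹ * (x * C) := by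
            rw [hAx.inv_left.eq, ← hCx.eq]
      _ = A * Bm * C := by group
  have e3 : wlen Γ (A * Bm * C) ≤ c.length + mid.length + f.length := by
    calc wlen Γ (A * Bm * C) ≤ (c ++ mid ++ f).length :=
          wlen_le_length (by simp [evalWord_append, ← hA', ← hB', ← hC', mul_assoc])
      _ ≤ c.length + mid.length + f.length := by simp [List.length_append]; omega
  have e4 : w.length = c.length + mid.length + f.length + 2 := by
    rw [hmid]; simp [List.length_append]; omega
  rw [e2]
  omega

lemma stepA {g : RAAG Γ} (hP : wlen Γ (g * g) = 2 * wlen Γ g) (ξ : V × Bool) :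
    wlen Γ g ≤ wlen Γ ((raagLetter Γ ξ)⁻¹ * g * raagLetter Γ ξ) := by
  set x := raagLetter Γ ξ with hx
  set t := x⁻¹ * g * x with ht
  have hg2 : g * g = x * (t * t) * x⁻¹ := by rw [ht]; group
  have hb : wlen Γ (g * g) ≤ 2 * wlen Γ t + 2 := by
    calc wlen Γ (g * g) = wlen Γ (x * (t * t) * x⁻¹) := by rw [← hg2]
      _ ≤ wlen Γ (x * (t * t)) + wlen Γ x⁻¹ := wlen_mul_le _ _
      _ ≤ wlen Γ x + wlen Γ (t * t) + wlen Γ x⁻¹ := by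
            have := wlen_mul_le (Γ := Γ) x (t * t)
            omega
      _ ≤ 2 * wlen Γ t + 2 := by
            have h1 := wlen_mul_le (Γ := Γ) t t
            have h2 : wlen Γ x = 1 := wlen_letter ξ
            have h3 : wlen Γ x⁻¹ = 1 := by rw [wlen_inv]; exact wlen_letter ξ
            omega
  have hpar : wlen Γ t % 2 = wlen Γ g % 2 :=
    parity_mod _ _ (by rw [ht, hx]; exact wlen_parity_conj _ g)
  omega

lemma stepB {g : RAAG Γ} {ξ : V × Bool} (hP : wlen Γ (g * g) = 2 * wlen Γ g)
    (ht : wlen Γ ((raagLetter Γ ξ)⁻¹ * g * raagLetter Γ ξ) = wlen Γ g) :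
    wlen Γ (((raagLetter Γ ξ)⁻¹ * g * raagLetter Γ ξ) *
      ((raagLetter Γ ξ)⁻¹ * g * raagLetter Γ ξ)) =
      2 * wlen Γ ((raagLetter Γ ξ)⁻¹ * g * raagLetter Γ ξ) := by
  set x := raagLetter Γ ξ with hx
  set t := x⁻¹ * g * x with htdef
  set L := wlen Γ g with hL
  by_contra hne
  have htt : t * t = x⁻¹ * (g * g) * x := by rw [htdef]; group
  have hub : wlen Γ (t * t) ≤ 2 * L := by
    have := wlen_mul_le (Γ := Γ) t t
    omega
  have hlb : 2 * L ≤ wlen Γ (t * t) + 2 := by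
    have hgg : g * g = x * (t * t) * x⁻¹ := by rw [htt]; group
    calc 2 * L = wlen Γ (g * g) := hP.symm
      _ = wlen Γ (x * (t * t) * x⁻¹) := by rw [← hgg]
      _ ≤ wlen Γ x + wlen Γ (t * t) + wlen Γ x⁻¹ := by
            have h1 := wlen_mul_le (Γ := Γ) (x * (t * t)) x⁻¹
            have h2 := wlen_mul_le (Γ := Γ) x (t * t)
            omega
      _ ≤ wlen Γ (t * t) + 2 := by
            have h2 : wlen Γ x = 1 := wlen_letter ξ
            have h3 : wlen Γ x⁻¹ = 1 := by rw [wlen_inv]; exact wlen_letter ξ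
            omega
  have hpar : wlen Γ (t * t) % 2 = wlen Γ (g * g) % 2 :=
    parity_mod _ _ (by rw [htt]; exact wlen_parity_conj _ _)
  have htt2 : wlen Γ (t * t) = 2 * L - 2 ∧ 2 ≤ 2 * L := by
    constructor <;> omega
  obtain ⟨w, hw, hl⟩ := exists_geodesic g
  have hWgeo : (w ++ w).length = wlen Γ (evalWord Γ (w ++ w)) := by
    rw [evalWord_append, hw, hP]
    simp [hl]
    omega
  have hWnp : ¬ HasPair Γ (w ++ w) := noPair_geo hWgeo
  -- front cancellation into g
  have hxg2 : wlen Γ (x⁻¹ * (g * g)) ≤ 2 * L - 1 := by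
    have e5 : x⁻¹ * (g * g) = (x⁻¹ * (g * g) * x) * x⁻¹ := by group
    have h6 : wlen Γ (x⁻¹ * (g * g) * x) = 2 * L - 2 := by rw [← htt]; exact htt2.1
    calc wlen Γ (x⁻¹ * (g * g)) = wlen Γ ((x⁻¹ * (g * g) * x) * x⁻¹) := by rw [← e5]
      _ ≤ (2 * L - 2) + 1 := by
          have h7 := wlen_mul_le (Γ := Γ) (x⁻¹ * (g * g) * x) x⁻¹
          have h8 : wlen Γ x⁻¹ = 1 := by rw [wlen_inv]; exact wlen_letter ξ
          omega
      _ ≤ 2 * L - 1 := by omega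
  have hp1 : HasPair Γ (linv ξ :: (w ++ w)) := by
    apply hasPair_of_short
    rw [evalWord_cons, raagLetter_linv, evalWord_append, hw, ← hx]
    simp only [List.length_cons, List.length_append]
    calc wlen Γ (x⁻¹ * (g * g)) ≤ 2 * L - 1 := hxg2
      _ < w.length + w.length + 1 := by rw [hl, ← hL]; omega
  have hfront : wlen Γ (x⁻¹ * g) + 1 ≤ L := by
    cases hp1 with
    | there _ hp => exact absurd hp hWnp
    | here hc =>
        obtain ⟨c, d0, hcd, _, hind⟩ := hc.exists_decomp
        rw [linv_linv] at hcd
        have hcind : ∀ m ∈ c, Ind Γ ξ m := fun m hm => hind m hm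
        have hdecw : ∃ p q, w = p ++ ξ :: q ∧ ∀ m ∈ p, Ind Γ ξ m := by
          rcases List.append_eq_append_iff.mp hcd with ⟨a', ha1, ha2⟩ | ⟨c', hc1, hc2⟩
          · exact ⟨a', d0, ha2, fun m hm => hcind m (ha1 ▸ List.mem_append_right _ hm)⟩
          · cases c' with
            | nil =>
                rw [List.nil_append] at hc2
                exact ⟨[], d0, by simpa using hc2.symm, by simp⟩
            | cons z c'' =>
                rw [List.cons_append, List.cons.injEq] at hc2
                exact ⟨c, c'', by rw [hc1, ← hc2.1], hcind⟩
        obtain ⟨p, q, hpq, hpind⟩ := hdecw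
        have hgx : x⁻¹ * g = evalWord Γ (p ++ q) := by
          rw [← hw, hpq]
          simp only [evalWord_append, evalWord_cons, ← hx]
          have hpx : Commute x (evalWord Γ p) := word_commute hpind
          calc x⁻¹ * (evalWord Γ p * (x * evalWord Γ q))
              = (x⁻¹ * evalWord Γ p) * x * evalWord Γ q := by group
            _ = (evalWord Γ p * x⁻¹) * x * evalWord Γ q := by rw [hpx.inv_left.eq]
            _ = evalWord Γ p * evalWord Γ q := by group
        have hlen : w.length = p.length + q.length + 1 := by
          rw [hpq]; simp [List.length_append]; omega
        calc wlen Γ (x⁻¹ * g) + 1 ≤ (p ++ q).length + 1 := by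
              have := wlen_le_length (g := x⁻¹ * g) hgx.symm
              omega
          _ ≤ L := by
              rw [hL, ← hl, hlen]
              simp [List.length_append]
  -- back cancellation
  have hg2x : wlen Γ ((g * g) * x) ≤ 2 * L - 1 := by
    have e5 : (g * g) * x = x * (x⁻¹ * (g * g) * x) := by group
    calc wlen Γ ((g * g) * x) = wlen Γ (x * (x⁻¹ * (g * g) * x)) := by rw [← e5]
      _ ≤ 1 + (2 * L - 2) := by
          have h7 := wlen_mul_le (Γ := Γ) x (x⁻¹ * (g * g) * x)
          have h8 : wlen Γ x = 1 := wlen_letter ξ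
          have h6 : wlen Γ (x⁻¹ * (g * g) * x) = 2 * L - 2 := by rw [← htt]; exact htt2.1
          omega
      _ ≤ 2 * L - 1 := by omega
  have hp2 : HasPair Γ ((w ++ w) ++ [ξ]) := by
    apply hasPair_of_short
    rw [evalWord_append, evalWord_append, eval_singleton, hw, ← hx]
    simp only [List.length_append, List.length_singleton]
    calc wlen Γ (g * g * x) ≤ 2 * L - 1 := hg2x
      _ < w.length + w.length + 1 := by rw [hl, ← hL]; omega
  have hback : wlen Γ (g * x) + 1 ≤ L := by
    obtain ⟨α, y, β, γ, hdec, hβ⟩ := hasPair_decomp hp2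
    rcases pair_split hdec hβ with hA | hB | ⟨α', βA, βB, γ', hA, hB, hβA, hβB⟩
    · exact absurd hA hWnp
    · exact absurd hB (not_hasPair_singleton (Γ := Γ) ξ)
    · cases βB with
      | cons bb βB' =>
          exfalso
          rw [List.cons_append, List.cons.injEq] at hB
          simpa using hB.2
      | nil =>
          rw [List.nil_append] at hB
          rw [List.cons.injEq] at hB
          have hyy : y = linv ξ := by rw [hB.1, linv_linv]
          subst hyy
          have hβA' : ∀ m ∈ βA, Ind Γ ξ m := fun m hm => hβA m hm
          have hdecw : ∃ p q, w = p ++ linv ξ :: q ∧ ∀ m ∈ q, Ind Γ ξ m := by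
            rcases List.append_eq_append_iff.mp hA with ⟨a', ha1, ha2⟩ | ⟨c', hc1, hc2⟩
            · exact ⟨a', βA, ha2, hβA'⟩
            · cases c' with
              | nil =>
                  rw [List.nil_append] at hc2
                  exact ⟨[], βA, by simpa using hc2.symm, hβA'⟩
              | cons z c'' =>
                  exfalso
                  rw [List.cons_append, List.cons.injEq] at hc2
                  have hmem : linv ξ ∈ w := by
                    rw [hc1, ← hc2.1]
                    exact List.mem_append_right _ List.mem_cons_self
                  have : linv ξ ∈ βA := hc2.2 ▸ List.mem_append_right _ hmem
                  exact (hβA' (linv ξ) this).1 rfl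
          obtain ⟨p, q, hpq, hqind⟩ := hdecw
          have hgx : g * x = evalWord Γ (p ++ q) := by
            rw [← hw, hpq]
            simp only [evalWord_append, evalWord_cons, raagLetter_linv, ← hx]
            have hqx : Commute x (evalWord Γ q) := word_commute hqind
            calc evalWord Γ p * (x⁻¹ * evalWord Γ q) * x
                = evalWord Γ p * x⁻¹ * (evalWord Γ q * x) := by group
              _ = evalWord Γ p * x⁻¹ * (x * evalWord Γ q) := by rw [← hqx.eq]
              _ = evalWord Γ p * evalWord Γ q := by group
          have hlen : w.length = p.length + q.length + 1 := by
            rw [hpq]; simp [List.length_append]; omega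
          calc wlen Γ (g * x) + 1 ≤ (p ++ q).length + 1 := by
                have := wlen_le_length (g := g * x) hgx.symm
                omega
            _ ≤ L := by
                rw [hL, ← hl, hlen]
                simp [List.length_append]
  have hbe := both_ends (ξ := ξ) (g := g)
    (by rw [← hx]; omega) (by rw [← hx]; omega)
  rw [← hx, ← htdef, ht] at hbe
  omega

end Stmt19Aux
namespace Stmt19Aux

attribute [local instance] Classical.propDecidable

variable {V : Type} {Γ : SimpleGraph V}

lemma conj_min_aux : ∀ n : ℕ, ∀ g u : RAAG Γ, wlen Γ (g * g) = 2 * wlen Γ g →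
    wlen Γ u ≤ n → wlen Γ g ≤ wlen Γ (u⁻¹ * g * u) := by
  intro n
  induction n with
  | zero =>
      intro g u hP hu
      have : u = 1 := eq_one_of_wlen_zero (Nat.le_zero.mp hu)
      subst this
      simp
  | succ n ih =>
      intro g u hP hu
      by_cases h0 : wlen Γ u ≤ n
      · exact ih g u hP h0
      have hun : wlen Γ u = n + 1 := by omega
      by_contra hlt
      push_neg at hlt
      set L := wlen Γ g with hL
      obtain ⟨wu, hwu, hlu⟩ := exists_geodesic u
      obtain ⟨wg, hwg, hlg⟩ := exists_geodesic g
      have hinv_len : (invWord wu).length = wlen Γ (u⁻¹) := by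
        rw [invWord_length, hlu, wlen_inv]
      have hinv_eval : evalWord Γ (invWord wu) = u⁻¹ := by rw [eval_invWord, hwu]
      have hinv_geo : ¬ HasPair Γ (invWord wu) :=
        noPair_geo (by rw [hinv_eval]; exact hinv_len)
      have hg_np : ¬ HasPair Γ wg := noPair_geo (by rw [hwg, ← hlg])
      have hu_np : ¬ HasPair Γ wu := noPair_geo (by rw [hwu, ← hlu])
      have hW_eval : evalWord Γ (invWord wu ++ (wg ++ wu)) = u⁻¹ * g * u := by
        simp only [evalWord_append, hinv_eval, hwg, hwu, mul_assoc]
      have hp : HasPair Γ (invWord wu ++ (wg ++ wu)) := by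
        apply hasPair_of_short
        rw [hW_eval]
        simp only [List.length_append, invWord_length]
        have h1 : wlen Γ (u⁻¹ * g * u) < wlen Γ g := hlt
        have h2 : wg.length = wlen Γ g := hlg
        omega
      -- extract: u = y⁻¹ * u₁ with wlen u₁ ≤ n, and wlen (y g y⁻¹) ≤ L
      have hmain : ∃ (y : V × Bool) (u₁ : RAAG Γ),
          u = (raagLetter Γ y)⁻¹ * u₁ ∧ wlen Γ u₁ ≤ n ∧
          wlen Γ (raagLetter Γ y * g * (raagLetter Γ y)⁻¹) ≤ L := by
        obtain ⟨α, y, β, γ, hdec, hβ⟩ := hasPair_decomp hp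
        rcases pair_split hdec hβ with hA | hB | ⟨α', βA, βB, γ', hA, hB, hβA, hβB⟩
        · exact absurd hA hinv_geo
        · -- pair inside wg ++ wu
          obtain ⟨α2, y2, β2, γ2, hdec2, hβ2⟩ := hasPair_decomp hB
          rcases pair_split hdec2 hβ2 with hA2 | hB2 | ⟨α₂', βA₂, βB₂, γ₂', hA2, hB2, hβA₂, hβB₂⟩
          · exact absurd hA2 hg_np
          · exact absurd hB2 hu_np
          · refine ⟨y2, evalWord Γ (βB₂ ++ γ₂'), ?_, ?_, ?_⟩
            · rw [← hwu, hB2]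
              simp only [evalWord_append, evalWord_cons, raagLetter_linv]
              rw [← mul_assoc, ← (word_commute hβB₂).inv_left.eq, mul_assoc]
            · have h1 : wu.length = βB₂.length + γ₂'.length + 1 := by
                rw [hB2]; simp [List.length_append]; omega
              have h2 := wlen_le_length (g := evalWord Γ (βB₂ ++ γ₂')) rfl
              rw [hlu, hun] at h1
              simp only [List.length_append] at h2
              omega
            · -- g = g₁ * y2
              have hg1 : g = evalWord Γ (α₂' ++ βA₂) * raagLetter Γ y2 := by
                rw [← hwg, hA2]
                simp only [evalWord_append, evalWord_cons]
                rw [mul_assoc, (word_commute hβA₂).eq, ← mul_assoc]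
              have e1 : raagLetter Γ y2 * g * (raagLetter Γ y2)⁻¹ =
                  raagLetter Γ y2 * evalWord Γ (α₂' ++ βA₂) := by
                rw [hg1]; group
              have h1 : wg.length = α₂'.length + βA₂.length + 1 := by
                rw [hA2]; simp [List.length_append]; omega
              have h2 := wlen_le_length (g := evalWord Γ (α₂' ++ βA₂)) rfl
              simp only [List.length_append] at h2
              calc wlen Γ (raagLetter Γ y2 * g * (raagLetter Γ y2)⁻¹)
                  = wlen Γ (raagLetter Γ y2 * evalWord Γ (α₂' ++ βA₂)) := by rw [e1]
                _ ≤ wlen Γ (raagLetter Γ y2) + wlen Γ (evalWord Γ (α₂' ++ βA₂)) :=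
                    wlen_mul_le _ _
                _ ≤ L := by
                    rw [wlen_letter]
                    rw [hL, ← hlg]
                    omega
        · -- cross between u⁻¹-part and (wg ++ wu)
          refine ⟨y, (evalWord Γ (α' ++ βA))⁻¹, ?_, ?_, ?_⟩
          · have : u⁻¹ = evalWord Γ (α' ++ βA) * raagLetter Γ y := by
              rw [← hinv_eval, hA]
              simp only [evalWord_append, evalWord_cons]
              rw [mul_assoc, (word_commute hβA).eq, ← mul_assoc]
            calc u = (u⁻¹)⁻¹ := by group
              _ = (evalWord Γ (α' ++ βA) * raagLetter Γ y)⁻¹ := by rw [this]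
              _ = (raagLetter Γ y)⁻¹ * (evalWord Γ (α' ++ βA))⁻¹ := by group
          · have h1 : (invWord wu).length = α'.length + βA.length + 1 := by
              rw [hA]; simp [List.length_append]; omega
            have h2 := wlen_le_length (g := evalWord Γ (α' ++ βA)) rfl
            rw [invWord_length, hlu, hun] at h1
            simp only [List.length_append] at h2
            rw [wlen_inv]
            omega
          · -- wlen (y g y⁻¹) ≤ L via sub-splitting wg ++ wu = βB ++ linv y :: γ'
            rcases List.append_eq_append_iff.mp hB with ⟨a', ha1, ha2⟩ | ⟨c', hc1, hc2⟩
            · -- βB = wg ++ a' : g commutes with y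
              have hcg : Commute (raagLetter Γ y) g := by
                rw [← hwg]
                exact word_commute (fun m hm => hβB m (ha1 ▸ List.mem_append_left _ hm))
              have : raagLetter Γ y * g * (raagLetter Γ y)⁻¹ = g := by
                rw [hcg.eq]; group
              rw [this]
            · cases c' with
              | nil =>
                  rw [List.append_nil] at hc1
                  have hcg : Commute (raagLetter Γ y) g := by
                    rw [← hwg]
                    exact word_commute (fun m hm => hβB m (hc1 ▸ hm))
                  have : raagLetter Γ y * g * (raagLetter Γ y)⁻¹ = g := by
                    rw [hcg.eq]; group
                  rw [this]
              | cons z c'' =>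
                  rw [List.cons_append, List.cons.injEq] at hc2
                  have hwgdec : wg = βB ++ linv y :: c'' := by rw [hc1, ← hc2.1]
                  have hyg : raagLetter Γ y * g = evalWord Γ (βB ++ c'') := by
                    rw [← hwg, hwgdec]
                    simp only [evalWord_append, evalWord_cons, raagLetter_linv]
                    have hbx : Commute (raagLetter Γ y) (evalWord Γ βB) :=
                      word_commute hβB
                    calc raagLetter Γ y * (evalWord Γ βB *
                          ((raagLetter Γ y)⁻¹ * evalWord Γ c''))
                        = (raagLetter Γ y * evalWord Γ βB) *
                          (raagLetter Γ y)⁻¹ * evalWord Γ c'' := by group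
                      _ = (evalWord Γ βB * raagLetter Γ y) *
                          (raagLetter Γ y)⁻¹ * evalWord Γ c'' := by rw [hbx.eq]
                      _ = evalWord Γ βB * evalWord Γ c'' := by group
                  have h1 : wg.length = βB.length + c''.length + 1 := by
                    rw [hwgdec]; simp [List.length_append]; omega
                  have h2 := wlen_le_length (g := evalWord Γ (βB ++ c'')) rfl
                  simp only [List.length_append] at h2
                  have e2 : raagLetter Γ y * g * (raagLetter Γ y)⁻¹ =
                      evalWord Γ (βB ++ c'') * (raagLetter Γ y)⁻¹ := by
                    rw [← hyg]
                  calc wlen Γ (raagLetter Γ y * g * (raagLetter Γ y)⁻¹)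
                      = wlen Γ (evalWord Γ (βB ++ c'') * (raagLetter Γ y)⁻¹) := by rw [e2]
                    _ ≤ wlen Γ (evalWord Γ (βB ++ c'')) + wlen Γ ((raagLetter Γ y)⁻¹) :=
                        wlen_mul_le _ _
                    _ ≤ L := by
                        rw [wlen_inv, wlen_letter, hL, ← hlg]
                        omega
      obtain ⟨y, u₁, huy, hu1, htle⟩ := hmain
      have hζy : raagLetter Γ (linv y) = (raagLetter Γ y)⁻¹ := raagLetter_linv Γ y
      have htform : raagLetter Γ y * g * (raagLetter Γ y)⁻¹ =
          (raagLetter Γ (linv y))⁻¹ * g * raagLetter Γ (linv y) := by rw [hζy]; group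
      have htle' : wlen Γ ((raagLetter Γ (linv y))⁻¹ * g * raagLetter Γ (linv y)) ≤
          wlen Γ g := by
        rw [← htform]; exact htle
      have htge : wlen Γ g ≤
          wlen Γ ((raagLetter Γ (linv y))⁻¹ * g * raagLetter Γ (linv y)) :=
        stepA hP (linv y)
      have htL : wlen Γ ((raagLetter Γ (linv y))⁻¹ * g * raagLetter Γ (linv y)) =
          wlen Γ g := le_antisymm htle' htge
      have hPt := stepB (ξ := linv y) hP htL
      have hconj : u⁻¹ * g * u =
          u₁⁻¹ * ((raagLetter Γ (linv y))⁻¹ * g * raagLetter Γ (linv y)) * u₁ := by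
        rw [huy, hζy]
        group
      have hfin := ih _ u₁ hPt hu1
      rw [← hconj, htL] at hfin
      have h1 : wlen Γ (u⁻¹ * g * u) < wlen Γ g := hlt
      omega

lemma conj_min {g : RAAG Γ} (hP : wlen Γ (g * g) = 2 * wlen Γ g) (u : RAAG Γ) :
    wlen Γ g ≤ wlen Γ (u⁻¹ * g * u) :=
  conj_min_aux (wlen Γ u) g u hP le_rfl

end Stmt19Aux
theorem stmt19 {V : Type} (Γ : SimpleGraph V) (h a g b : RAAG Γ) (n : ℕ)
    (hn : 2 ≤ n) (hd : h = a * g ^ n * b)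
    (hgeo : wlen Γ h = wlen Γ a + n * wlen Γ g + wlen Γ b) :
    CyclicallyReduced Γ g := by
  have h2 : wlen Γ (g ^ n) ≤ n * wlen Γ g := Stmt19Aux.wlen_pow_le g n
  have h1 : wlen Γ h ≤ wlen Γ a + wlen Γ (g ^ n) + wlen Γ b := by
    rw [hd]
    calc wlen Γ (a * g ^ n * b) ≤ wlen Γ (a * g ^ n) + wlen Γ b :=
          Stmt19Aux.wlen_mul_le _ _
      _ ≤ wlen Γ a + wlen Γ (g ^ n) + wlen Γ b := by
          have := Stmt19Aux.wlen_mul_le (Γ := Γ) a (g ^ n)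
          omega
  have hgn : wlen Γ (g ^ n) = n * wlen Γ g := by omega
  have hP : wlen Γ (g * g) = 2 * wlen Γ g := by
    have h3 : g ^ n = (g * g) * g ^ (n - 2) := by
      rw [← pow_two, ← pow_add]
      congr 1
      omega
    have h4 : wlen Γ (g ^ n) ≤ wlen Γ (g * g) + (n - 2) * wlen Γ g := by
      calc wlen Γ (g ^ n) = wlen Γ ((g * g) * g ^ (n - 2)) := by rw [← h3]
        _ ≤ wlen Γ (g * g) + wlen Γ (g ^ (n - 2)) := Stmt19Aux.wlen_mul_le _ _
        _ ≤ wlen Γ (g * g) + (n - 2) * wlen Γ g := by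
            have := Stmt19Aux.wlen_pow_le g (n - 2)
            omega
    have h5 : wlen Γ (g * g) ≤ 2 * wlen Γ g := by
      have := Stmt19Aux.wlen_mul_le (Γ := Γ) g g
      omega
    have h6 : (n - 2) * wlen Γ g + 2 * wlen Γ g = n * wlen Γ g := by
      have h7 : n - 2 + 2 = n := by omega
      calc (n - 2) * wlen Γ g + 2 * wlen Γ g = (n - 2 + 2) * wlen Γ g := by ring
        _ = n * wlen Γ g := by rw [h7]
    omega
  intro u
  exact Stmt19Aux.conj_min hP u
end
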